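/- arXiv:2312.12067 — 7 statements merged into one kernel-verified Lean document; each statement's English description precedes it below -/
import Mathlib

section
/- For the ratio game V(x₁, x₂) = (x₁ᵀ R x₂)/(x₁ᵀ S x₂) with S = s ⊗ 1 (transitions depend only on player 1), if (x₁*, x₂*) is a Nash equilibrium (a saddle point of V over the product of simplices), then the generalized Minty property holds: ⟨x − x*, F(x) ∘ A(x) ∘ W(x*)⟩ ≥ 0 for all x, where F(x) = (∇_{x₁}V(x), −∇_{x₂}V(x)), A(x) = (x₁ᵀs · 1, 1) and W(x*) = ((1/(x₁*ᵀ s)) · 1, 1), and ∘ denotes the Hadamard product. -/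
/-!
With the weights, player 1's term is `⟨x₁ - x₁*, R x₂ - V(x) s⟩ / (x₁*ᵀs)`, since the weight `x₁ᵀs`
cancels the denominator of `∇_{x₁}V(x) = (R x₂ - V(x) s) / (x₁ᵀs)`. As `x₁ᵀR x₂ = V(x) x₁ᵀs`, it equals
`V(x₁, x₂) - V(x₁*, x₂)`, while player 2's term is `V(x₁, x₂*) - V(x₁, x₂)` by linearity in `x₂`.
The Minty sum is thus `V(x₁, x₂*) - V(x₁*, x₂)`, which is nonnegative at a saddle point.
-/

open Finset

/-- Ratio game value with single controller (player 1): `V(x₁,x₂) = (x₁ᵀ R x₂)/(x₁ᵀ s)`. -/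
noncomputable def scRatioV {n₁ n₂ : ℕ} (R : Fin n₁ → Fin n₂ → ℝ) (svec : Fin n₁ → ℝ)
    (x₁ : Fin n₁ → ℝ) (x₂ : Fin n₂ → ℝ) : ℝ :=
  (∑ i, ∑ j, x₁ i * R i j * x₂ j) / (∑ i, x₁ i * svec i)

open Matrix

theorem dotProduct_pos_of_mem_stdSimplex {ι 𝕜 : Type*} [Fintype ι] [Semiring 𝕜] [PartialOrder 𝕜]
    [IsStrictOrderedRing 𝕜] {x s : ι → 𝕜} (hx : x ∈ stdSimplex 𝕜 ι) (hs : ∀ i, 0 < s i) :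
    0 < x ⬝ᵥ s := by
  obtain ⟨i, -, hi⟩ := exists_ne_zero_of_sum_ne_zero (hx.2.symm ▸ one_ne_zero : ∑ i, x i ≠ 0)
  exact sum_pos' (fun j _ => mul_nonneg (hx.1 j) (hs j).le)
    ⟨i, mem_univ i, mul_pos ((hx.1 i).lt_of_ne' hi) (hs i)⟩

theorem hasDerivAt_update_dotProduct {ι 𝕜 : Type*} [Fintype ι] [DecidableEq ι]
    [NontriviallyNormedField 𝕜] (x v : ι → 𝕜) (i : ι) :
    HasDerivAt (fun t => Function.update x i t ⬝ᵥ v) (v i) (x i) := by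
  have := HasDerivAt.fun_sum (u := univ) fun k _ =>
    (hasDerivAt_pi.1 (hasDerivAt_update x i (x i)) k).mul_const (v k)
  simpa [dotProduct, Pi.single_apply] using this

section RatioGame

variable {n₁ n₂ : ℕ} (R : Fin n₁ → Fin n₂ → ℝ) (s : Fin n₁ → ℝ) (x₁ y₁ : Fin n₁ → ℝ)
  (x₂ y₂ : Fin n₂ → ℝ)

theorem scRatioV_eq_dotProduct : scRatioV R s x₁ x₂ = x₁ ⬝ᵥ (of R *ᵥ x₂) / (x₁ ⬝ᵥ s) := by
  simp only [scRatioV, dotProduct, mulVec, of_apply, mul_sum, mul_assoc]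

theorem scRatioV_mul_dotProduct (hx : x₁ ⬝ᵥ s ≠ 0) :
    scRatioV R s x₁ x₂ * (x₁ ⬝ᵥ s) = x₁ ⬝ᵥ (of R *ᵥ x₂) := by
  rw [scRatioV_eq_dotProduct, div_mul_cancel₀ _ hx]

theorem deriv_scRatioV_update_left (hD : x₁ ⬝ᵥ s ≠ 0) (i : Fin n₁) :
    deriv (fun t => scRatioV R s (Function.update x₁ i t) x₂) (x₁ i) =
      ((of R *ᵥ x₂) i - scRatioV R s x₁ x₂ * s i) / (x₁ ⬝ᵥ s) := by
  have hD' : Function.update x₁ i (x₁ i) ⬝ᵥ s ≠ 0 := by simpa using hD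
  simp_rw [scRatioV_eq_dotProduct]
  refine ((hasDerivAt_update_dotProduct x₁ _ i).div
    (hasDerivAt_update_dotProduct x₁ s i) hD').deriv.trans ?_
  simp only [Function.update_eq_self]
  field_simp

theorem deriv_scRatioV_update_right (j : Fin n₂) :
    deriv (fun t => scRatioV R s x₁ (Function.update x₂ j t)) (x₂ j) =
      (x₁ ᵥ* of R) j / (x₁ ⬝ᵥ s) := by
  simp_rw [scRatioV_eq_dotProduct, dotProduct_mulVec, dotProduct_comm (x₁ ᵥ* of R)]
  exact ((hasDerivAt_update_dotProduct x₂ _ j).div_const _).deriv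

theorem sum_sub_mul_deriv_scRatioV_left (hx : x₁ ⬝ᵥ s ≠ 0) (hy : y₁ ⬝ᵥ s ≠ 0) :
    ∑ i, (x₁ i - y₁ i) *
        (deriv (fun t => scRatioV R s (Function.update x₁ i t) x₂) (x₁ i)
          * (∑ i', x₁ i' * s i') * (1 / (∑ i', y₁ i' * s i'))) =
      scRatioV R s x₁ x₂ - scRatioV R s y₁ x₂ := by
  simp_rw [← dotProduct.eq_1 x₁ s, ← dotProduct.eq_1 y₁ s,
    deriv_scRatioV_update_left R s x₁ x₂ hx]
  have hterm : ∀ i, (x₁ i - y₁ i) * (((of R *ᵥ x₂) i - scRatioV R s x₁ x₂ * s i) / (x₁ ⬝ᵥ s)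
      * (x₁ ⬝ᵥ s) * (1 / (y₁ ⬝ᵥ s))) =
      (x₁ - y₁) i * (of R *ᵥ x₂ - scRatioV R s x₁ x₂ • s) i / (y₁ ⬝ᵥ s) := fun i => by
    simp only [Pi.sub_apply, Pi.smul_apply, smul_eq_mul]
    field_simp
  rw [sum_congr rfl fun i _ => hterm i, ← sum_div, ← dotProduct.eq_1, sub_dotProduct,
    dotProduct_sub, dotProduct_sub, dotProduct_smul, dotProduct_smul,
    ← scRatioV_mul_dotProduct R s x₁ x₂ hx, ← scRatioV_mul_dotProduct R s y₁ x₂ hy]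
  field_simp
  ring

theorem sum_sub_mul_neg_deriv_scRatioV_right :
    ∑ j, (x₂ j - y₂ j) * -deriv (fun t => scRatioV R s x₁ (Function.update x₂ j t)) (x₂ j) =
      scRatioV R s x₁ y₂ - scRatioV R s x₁ x₂ := by
  simp_rw [deriv_scRatioV_update_right, scRatioV_eq_dotProduct, dotProduct_mulVec,
    mul_neg, sum_neg_distrib, ← mul_div_assoc, ← sum_div]
  change -((x₂ - y₂) ⬝ᵥ (x₁ ᵥ* of R) / _) = _
  rw [sub_dotProduct, dotProduct_comm x₂, dotProduct_comm y₂]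
  ring

end RatioGame

theorem ratio_game_generalized_minty_general {n₁ n₂ : ℕ}
    (R : Fin n₁ → Fin n₂ → ℝ) (svec : Fin n₁ → ℝ) (hsvec : ∀ i, 0 < svec i)
    (x₁s : Fin n₁ → ℝ) (x₂s : Fin n₂ → ℝ)
    (hx₁s : x₁s ∈ stdSimplex ℝ (Fin n₁))
    (hsaddle : ∀ x₁ ∈ stdSimplex ℝ (Fin n₁), ∀ x₂ ∈ stdSimplex ℝ (Fin n₂),
      scRatioV R svec x₁s x₂ ≤ scRatioV R svec x₁s x₂s ∧
      scRatioV R svec x₁s x₂s ≤ scRatioV R svec x₁ x₂s) :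
    ∀ x₁ ∈ stdSimplex ℝ (Fin n₁), ∀ x₂ ∈ stdSimplex ℝ (Fin n₂),
      0 ≤ (∑ i, (x₁ i - x₁s i) *
              (deriv (fun t => scRatioV R svec (Function.update x₁ i t) x₂) (x₁ i)
                * (∑ i', x₁ i' * svec i') * (1 / (∑ i', x₁s i' * svec i'))))
        + (∑ j, (x₂ j - x₂s j) *
              (- deriv (fun t => scRatioV R svec x₁ (Function.update x₂ j t)) (x₂ j))) := by
  intro x₁ hx₁ x₂ hx₂
  rw [sum_sub_mul_deriv_scRatioV_left R svec x₁ x₁s x₂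
      (dotProduct_pos_of_mem_stdSimplex hx₁ hsvec).ne'
      (dotProduct_pos_of_mem_stdSimplex hx₁s hsvec).ne',
    sum_sub_mul_neg_deriv_scRatioV_right]
  obtain ⟨h₁, h₂⟩ := hsaddle x₁ hx₁ x₂ hx₂
  linarith

/-- If `(x₁*, x₂*)` is a saddle point (Nash equilibrium) of the single-controller ratio game,
then the generalized Minty property `⟨x − x*, F(x) ∘ A(x) ∘ W(x*)⟩ ≥ 0` holds, where
`F(x) = (∇_{x₁}V(x), −∇_{x₂}V(x))`, `A(x) = (x₁ᵀs · 1, 1)` and `W(x*) = ((1/(x₁*ᵀ s)) · 1, 1)`. -/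
theorem ratio_game_generalized_minty {n₁ n₂ : ℕ}
    (R : Fin n₁ → Fin n₂ → ℝ) (svec : Fin n₁ → ℝ) (hsvec : ∀ i, 0 < svec i)
    (x₁s : Fin n₁ → ℝ) (x₂s : Fin n₂ → ℝ)
    (hx₁s : x₁s ∈ stdSimplex ℝ (Fin n₁)) (hx₂s : x₂s ∈ stdSimplex ℝ (Fin n₂))
    (hsaddle : ∀ x₁ ∈ stdSimplex ℝ (Fin n₁), ∀ x₂ ∈ stdSimplex ℝ (Fin n₂),
      scRatioV R svec x₁s x₂ ≤ scRatioV R svec x₁s x₂s ∧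
      scRatioV R svec x₁s x₂s ≤ scRatioV R svec x₁ x₂s) :
    ∀ x₁ ∈ stdSimplex ℝ (Fin n₁), ∀ x₂ ∈ stdSimplex ℝ (Fin n₂),
      0 ≤ (∑ i, (x₁ i - x₁s i) *
              (deriv (fun t => scRatioV R svec (Function.update x₁ i t) x₂) (x₁ i)
                * (∑ i', x₁ i' * svec i') * (1 / (∑ i', x₁s i' * svec i'))))
        + (∑ j, (x₂ j - x₂s j) *
              (- deriv (fun t => scRatioV R svec x₁ (Function.update x₂ j t)) (x₂ j))) :=
  ratio_game_generalized_minty_general R svec hsvec x₁s x₂s hx₁s hsaddle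
end

section
/- RVU regret bound for optimistic gradient descent: let Z be a convex compact subset of ℝᵐ with ℓ₂ diameter D, let (u⁽ᵗ⁾)_{t=0}^T be any sequence of utility vectors, and define z⁽ᵗ⁾ = Proj_Z(ẑ⁽ᵗ⁾ + η u⁽ᵗ⁻¹⁾), ẑ⁽ᵗ⁺¹⁾ = Proj_Z(ẑ⁽ᵗ⁾ + η u⁽ᵗ⁾). Then for any z* ∈ Z, Σ_{t=1}^T ⟨z* − z⁽ᵗ⁾, u⁽ᵗ⁾⟩ ≤ D²/(2η) + η Σ_{t=1}^T ‖u⁽ᵗ⁾ − u⁽ᵗ⁻¹⁾‖₂² − (1/(2η)) Σ_{t=1}^T (‖z⁽ᵗ⁾ − ẑ⁽ᵗ⁾‖₂² + ‖z⁽ᵗ⁾ − ẑ⁽ᵗ⁺¹⁾‖₂²). -/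
open Finset RealInnerProductSpace

private lemma polar_id {F : Type*} [NormedAddCommGroup F] [InnerProductSpace ℝ F]
    (a b c : F) : ⟪b - a, c - b⟫ = (‖c - a‖ ^ 2 - ‖c - b‖ ^ 2 - ‖b - a‖ ^ 2) / 2 := by
  have h : c - a = (c - b) + (b - a) := by abel
  rw [h, norm_add_sq_real, real_inner_comm]
  ring

set_option maxHeartbeats 1000000 in
/-- RVU regret bound for optimistic gradient descent: with `z⁽ᵗ⁾ = Proj_Z(ẑ⁽ᵗ⁾ + η u⁽ᵗ⁻¹⁾)`,
`ẑ⁽ᵗ⁺¹⁾ = Proj_Z(ẑ⁽ᵗ⁾ + η u⁽ᵗ⁾)`, for any comparator `z* ∈ Z`,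
`Σ_{t=1}^T ⟨z* − z⁽ᵗ⁾, u⁽ᵗ⁾⟩ ≤ D²/(2η) + η Σ ‖u⁽ᵗ⁾ − u⁽ᵗ⁻¹⁾‖² −
(1/(2η)) Σ (‖z⁽ᵗ⁾ − ẑ⁽ᵗ⁾‖² + ‖z⁽ᵗ⁾ − ẑ⁽ᵗ⁺¹⁾‖²)`. -/
theorem rvu_bound_ogd {m : ℕ}
    (Z : Set (EuclideanSpace ℝ (Fin m))) (hZc : Convex ℝ Z) (hZk : IsCompact Z)
    (D η : ℝ) (hη : 0 < η)
    (hD : ∀ z ∈ Z, ∀ z' ∈ Z, ‖z - z'‖ ≤ D)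
    (proj : EuclideanSpace ℝ (Fin m) → EuclideanSpace ℝ (Fin m))
    (hproj : ∀ v, proj v ∈ Z ∧ ∀ y ∈ Z, ‖v - proj v‖ ≤ ‖v - y‖)
    (u z zh : ℕ → EuclideanSpace ℝ (Fin m))
    (hz0 : z 0 ∈ Z) (hinit : zh 1 = z 0)
    (hz : ∀ t, 1 ≤ t → z t = proj (zh t + η • u (t - 1)))
    (hzh : ∀ t, 1 ≤ t → zh (t + 1) = proj (zh t + η • u t))
    (T : ℕ) (zstar : EuclideanSpace ℝ (Fin m)) (hzstar : zstar ∈ Z) :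
    ∑ t ∈ Finset.Icc 1 T, ⟪zstar - z t, u t⟫ ≤
      D ^ 2 / (2 * η) + η * ∑ t ∈ Finset.Icc 1 T, ‖u t - u (t - 1)‖ ^ 2
        - (1 / (2 * η)) * ∑ t ∈ Finset.Icc 1 T,
            (‖z t - zh t‖ ^ 2 + ‖z t - zh (t + 1)‖ ^ 2) := by
  -- variational inequality for the projection
  have hVI : ∀ v, ∀ y ∈ Z, ⟪v - proj v, y - proj v⟫ ≤ 0 := by
    intro v y hy
    have hmem := (hproj v).1
    haveI : Nonempty Z := ⟨⟨z 0, hz0⟩⟩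
    have heq : ‖v - proj v‖ = ⨅ w : Z, ‖v - (w : EuclideanSpace ℝ (Fin m))‖ := by
      have hbdd : BddBelow (Set.range fun w : Z => ‖v - (w : EuclideanSpace ℝ (Fin m))‖) :=
        ⟨0, by rintro x ⟨w, rfl⟩; positivity⟩
      exact le_antisymm (le_ciInf fun w => (hproj v).2 w w.2) (ciInf_le hbdd ⟨proj v, hmem⟩)
    exact (norm_eq_iInf_iff_real_inner_le_zero hZc hmem).mp heq y hy
  -- nonexpansiveness of the projection
  have hNE : ∀ v w, ‖proj v - proj w‖ ≤ ‖v - w‖ := by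
    intro v w
    have h1 := hVI v (proj w) (hproj w).1
    have h2 := hVI w (proj v) (hproj v).1
    have key : ‖proj v - proj w‖ ^ 2 ≤ ⟪v - w, proj v - proj w⟫ := by
      have e1 : ⟪v - w, proj v - proj w⟫ =
          ⟪proj v - proj w, proj v - proj w⟫ - ⟪v - proj v, proj w - proj v⟫
            - ⟪w - proj w, proj v - proj w⟫ := by
        simp only [inner_sub_left, inner_sub_right]; ring
      rw [e1, real_inner_self_eq_norm_sq]
      linarith
    have hc := real_inner_le_norm (v - w) (proj v - proj w)
    nlinarith [norm_nonneg (proj v - proj w), norm_nonneg (v - w),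
      sq_nonneg (‖proj v - proj w‖ - ‖v - w‖)]
  -- per-step inequality
  have step : ∀ t, 1 ≤ t → η * ⟪zstar - z t, u t⟫ ≤
      (‖zstar - zh t‖ ^ 2 - ‖zstar - zh (t + 1)‖ ^ 2) / 2
        + η ^ 2 * ‖u t - u (t - 1)‖ ^ 2
        - (‖z t - zh t‖ ^ 2 + ‖z t - zh (t + 1)‖ ^ 2) / 2 := by
    intro t ht
    have hp : z t = proj (zh t + η • u (t - 1)) := hz t ht
    have hq : zh (t + 1) = proj (zh t + η • u t) := hzh t ht
    have hqZ : zh (t + 1) ∈ Z := hq ▸ (hproj _).1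
    have hA : ⟪(zh t + η • u t) - zh (t + 1), zstar - zh (t + 1)⟫ ≤ 0 := by
      rw [hq]; exact hVI _ _ hzstar
    have hB : ⟪(zh t + η • u (t - 1)) - z t, zh (t + 1) - z t⟫ ≤ 0 := by
      rw [hp]; exact hVI _ _ hqZ
    have hne : ‖z t - zh (t + 1)‖ ≤ η * ‖u t - u (t - 1)‖ := by
      rw [hp, hq]
      calc ‖proj (zh t + η • u (t - 1)) - proj (zh t + η • u t)‖
          ≤ ‖(zh t + η • u (t - 1)) - (zh t + η • u t)‖ := hNE _ _
        _ = η * ‖u t - u (t - 1)‖ := by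
            have e : (zh t + η • u (t - 1)) - (zh t + η • u t)
                = (-η) • (u t - u (t - 1)) := by module
            rw [e, norm_smul, Real.norm_eq_abs, abs_neg, abs_of_pos hη]
    -- expand hA
    have hA' : η * ⟪u t, zstar - zh (t + 1)⟫
        ≤ (‖zstar - zh t‖ ^ 2 - ‖zstar - zh (t + 1)‖ ^ 2 - ‖zh (t + 1) - zh t‖ ^ 2) / 2 := by
      have e : (zh t + η • u t) - zh (t + 1) = η • u t - (zh (t + 1) - zh t) := by abel
      rw [e, inner_sub_left, real_inner_smul_left, polar_id] at hA
      linarith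
    -- expand hB
    have hB' : η * ⟪u (t - 1), zh (t + 1) - z t⟫
        ≤ (‖zh (t + 1) - zh t‖ ^ 2 - ‖zh (t + 1) - z t‖ ^ 2 - ‖z t - zh t‖ ^ 2) / 2 := by
      have e : (zh t + η • u (t - 1)) - z t = η • u (t - 1) - (z t - zh t) := by abel
      rw [e, inner_sub_left, real_inner_smul_left, polar_id] at hB
      linarith
    -- Cauchy–Schwarz term
    have hcs : ⟪u t - u (t - 1), zh (t + 1) - z t⟫ ≤ η * ‖u t - u (t - 1)‖ ^ 2 := by
      calc ⟪u t - u (t - 1), zh (t + 1) - z t⟫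
          ≤ ‖u t - u (t - 1)‖ * ‖zh (t + 1) - z t‖ := real_inner_le_norm _ _
        _ ≤ ‖u t - u (t - 1)‖ * (η * ‖u t - u (t - 1)‖) := by
            apply mul_le_mul_of_nonneg_left _ (norm_nonneg _)
            rw [norm_sub_rev]; exact hne
        _ = η * ‖u t - u (t - 1)‖ ^ 2 := by ring
    have hC : η * ⟪u t - u (t - 1), zh (t + 1) - z t⟫ ≤ η ^ 2 * ‖u t - u (t - 1)‖ ^ 2 := by
      nlinarith [hcs]
    have decomp : ⟪zstar - z t, u t⟫ = ⟪u t, zstar - zh (t + 1)⟫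
        + ⟪u (t - 1), zh (t + 1) - z t⟫ + ⟪u t - u (t - 1), zh (t + 1) - z t⟫ := by
      simp only [inner_sub_left, inner_sub_right]
      rw [real_inner_comm zstar (u t), real_inner_comm (z t) (u t)]
      ring
    have e1sq : ‖zh (t + 1) - z t‖ ^ 2 = ‖z t - zh (t + 1)‖ ^ 2 := by rw [norm_sub_rev]
    rw [decomp]
    nlinarith [hA', hB', hC]
  -- summed inequality
  have main : ∀ N, ∑ t ∈ Finset.Icc 1 N, η * ⟪zstar - z t, u t⟫ ≤
      (‖zstar - zh 1‖ ^ 2 - ‖zstar - zh (N + 1)‖ ^ 2) / 2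
        + η ^ 2 * ∑ t ∈ Finset.Icc 1 N, ‖u t - u (t - 1)‖ ^ 2
        - (1 / 2) * ∑ t ∈ Finset.Icc 1 N, (‖z t - zh t‖ ^ 2 + ‖z t - zh (t + 1)‖ ^ 2) := by
    intro N
    induction N with
    | zero => simp
    | succ n ih =>
      rw [Finset.sum_Icc_succ_top (by omega : 1 ≤ n + 1),
        Finset.sum_Icc_succ_top (by omega : 1 ≤ n + 1),
        Finset.sum_Icc_succ_top (by omega : 1 ≤ n + 1)]
      have hstep := step (n + 1) (by omega)
      linarith
  have hzd : ‖zstar - z 0‖ ≤ D := hD zstar hzstar (z 0) hz0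
  have hD2 : ‖zstar - zh 1‖ ^ 2 ≤ D ^ 2 := by
    rw [hinit]; exact pow_le_pow_left₀ (norm_nonneg _) hzd 2
  have hmain := main T
  have hkey : η * ∑ t ∈ Finset.Icc 1 T, ⟪zstar - z t, u t⟫ ≤
      D ^ 2 / 2 + η ^ 2 * ∑ t ∈ Finset.Icc 1 T, ‖u t - u (t - 1)‖ ^ 2
        - (1 / 2) * ∑ t ∈ Finset.Icc 1 T, (‖z t - zh t‖ ^ 2 + ‖z t - zh (t + 1)‖ ^ 2) := by
    rw [Finset.mul_sum]
    have := sq_nonneg ‖zstar - zh (T + 1)‖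
    linarith
  have hfin : ∑ t ∈ Finset.Icc 1 T, ⟪zstar - z t, u t⟫ ≤
      (D ^ 2 / 2 + η ^ 2 * ∑ t ∈ Finset.Icc 1 T, ‖u t - u (t - 1)‖ ^ 2
        - (1 / 2) * ∑ t ∈ Finset.Icc 1 T, (‖z t - zh t‖ ^ 2 + ‖z t - zh (t + 1)‖ ^ 2)) / η := by
    rw [le_div_iff₀ hη]
    linarith [mul_comm η (∑ t ∈ Finset.Icc 1 T, ⟪zstar - z t, u t⟫)]
  refine hfin.trans (le_of_eq ?_)
  field_simp
end

section
/- Per-iterate best-response gap for optimistic gradient descent: if z⁽ᵗ⁾ = Proj_Z(ẑ⁽ᵗ⁾ + η u⁽ᵗ⁻¹⁾) and ẑ⁽ᵗ⁺¹⁾ = Proj_Z(ẑ⁽ᵗ⁾ + η u⁽ᵗ⁾), then for every t ∈ {1,…,T}, max_{z* ∈ Z} ⟨z* − z⁽ᵗ⁾, u⁽ᵗ⁾⟩ ≤ (D_Z/η + max_{1≤t≤T} ‖u⁽ᵗ⁾‖₂)·(‖z⁽ᵗ⁾ − ẑ⁽ᵗ⁾‖₂ + ‖z⁽ᵗ⁾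 − ẑ⁽ᵗ⁺¹⁾‖₂). -/
open Finset RealInnerProductSpace

set_option maxHeartbeats 1000000

lemma proj_var_ineq {E : Type*} [NormedAddCommGroup E] [InnerProductSpace ℝ E]
    {Z : Set E} (hZc : Convex ℝ Z)
    {w v : E} (hw : w ∈ Z)
    (hmin : ∀ y ∈ Z, ‖v - w‖ ≤ ‖v - y‖) :
    ∀ y ∈ Z, ⟪v - w, y - w⟫ ≤ 0 := by
  have : ‖v - w‖ = ⨅ y : Z, ‖v - y‖ := by
    haveI : Nonempty Z := ⟨⟨w, hw⟩⟩
    refine le_antisymm (le_ciInf fun y => hmin y y.2) ?_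
    have hbdd : BddBelow (Set.range fun y : Z => ‖v - y‖) := by
      refine ⟨0, ?_⟩
      rintro x ⟨y, rfl⟩
      exact norm_nonneg _
    exact ciInf_le hbdd ⟨w, hw⟩
  exact (norm_eq_iInf_iff_real_inner_le_zero hZc hw).mp this

/-- Per-iterate best-response gap for optimistic gradient descent:
`max_{z* ∈ Z} ⟨z* − z⁽ᵗ⁾, u⁽ᵗ⁾⟩ ≤ (D_Z/η + max_{1≤t≤T} ‖u⁽ᵗ⁾‖)·(‖z⁽ᵗ⁾ − ẑ⁽ᵗ⁾‖ + ‖z⁽ᵗ⁾ − ẑ⁽ᵗ⁺¹⁾‖)`. -/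
theorem ogd_per_iterate_gap {m : ℕ}
    (Z : Set (EuclideanSpace ℝ (Fin m))) (hZc : Convex ℝ Z) (hZk : IsCompact Z)
    (D η : ℝ) (hη : 0 < η)
    (hD : ∀ z ∈ Z, ∀ z' ∈ Z, ‖z - z'‖ ≤ D)
    (proj : EuclideanSpace ℝ (Fin m) → EuclideanSpace ℝ (Fin m))
    (hproj : ∀ v, proj v ∈ Z ∧ ∀ y ∈ Z, ‖v - proj v‖ ≤ ‖v - y‖)
    (u z zh : ℕ → EuclideanSpace ℝ (Fin m))
    (hz0 : z 0 ∈ Z) (hinit : zh 1 = z 0)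
    (hz : ∀ t, 1 ≤ t → z t = proj (zh t + η • u (t - 1)))
    (hzh : ∀ t, 1 ≤ t → zh (t + 1) = proj (zh t + η • u t))
    (T : ℕ) (hT : 1 ≤ T) :
    ∀ t ∈ Finset.Icc 1 T, ∀ zstar ∈ Z,
      ⟪zstar - z t, u t⟫ ≤
        (D / η + (Finset.Icc 1 T).sup' (Finset.nonempty_Icc.mpr hT) (fun t' => ‖u t'‖))
          * (‖z t - zh t‖ + ‖z t - zh (t + 1)‖) := by
  intro t ht zstar hzs
  obtain ⟨ht1, htT⟩ := Finset.mem_Icc.mp ht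
  set M := (Finset.Icc 1 T).sup' (Finset.nonempty_Icc.mpr hT) (fun t' => ‖u t'‖) with hM
  have hMt : ‖u t‖ ≤ M := Finset.le_sup' (fun t' => ‖u t'‖) ht
  have hM0 : (0 : ℝ) ≤ M := (norm_nonneg _).trans hMt
  have hD0 : (0 : ℝ) ≤ D := by
    have := hD (z 0) hz0 (z 0) hz0
    simpa using this
  set w := zh (t + 1) with hwdef
  have hwp : w = proj (zh t + η • u t) := hzh t ht1
  have hwZ : w ∈ Z := hwp ▸ (hproj _).1
  have hvar : ⟪(zh t + η • u t) - w, zstar - w⟫ ≤ 0 := by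
    refine proj_var_ineq hZc hwZ ?_ zstar hzs
    intro y hy
    have := (hproj (zh t + η • u t)).2 y hy
    rwa [hwp]
  -- decompose inner product
  have hdecomp : ⟪zstar - z t, u t⟫ = ⟪zstar - w, u t⟫ + ⟪w - z t, u t⟫ := by
    rw [← inner_add_left]
    congr 1
    abel
  set A := ‖z t - zh t‖ with hA
  set B := ‖z t - w‖ with hB
  have hA0 : (0 : ℝ) ≤ A := norm_nonneg _
  have hB0 : (0 : ℝ) ≤ B := norm_nonneg _
  -- first term
  have h1 : η * ⟪zstar - w, u t⟫ ≤ (A + B) * D := by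
    have hsplit : ⟪(zh t + η • u t) - w, zstar - w⟫
        = ⟪zh t - w, zstar - w⟫ + η * ⟪u t, zstar - w⟫ := by
      have : (zh t + η • u t) - w = (zh t - w) + η • u t := by abel
      rw [this, inner_add_left, real_inner_smul_left]
    have h2 : η * ⟪u t, zstar - w⟫ ≤ ⟪w - zh t, zstar - w⟫ := by
      have : ⟪zh t - w, zstar - w⟫ + η * ⟪u t, zstar - w⟫ ≤ 0 := by
        rw [← hsplit]; exact hvar
      have heq : ⟪w - zh t, zstar - w⟫ = - ⟪zh t - w, zstar - w⟫ := by
        rw [← inner_neg_left]; congr 1; abel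
      linarith [this, heq]
    have h3 : ⟪w - zh t, zstar - w⟫ ≤ ‖w - zh t‖ * ‖zstar - w‖ :=
      real_inner_le_norm _ _
    have h4 : ‖w - zh t‖ ≤ A + B := by
      calc ‖w - zh t‖ ≤ ‖w - z t‖ + ‖z t - zh t‖ := norm_sub_le_norm_sub_add_norm_sub _ _ _
        _ = B + A := by rw [norm_sub_rev]
        _ = A + B := by ring
    have h5 : ‖zstar - w‖ ≤ D := hD zstar hzs w hwZ
    have hsym : ⟪zstar - w, u t⟫ = ⟪u t, zstar - w⟫ := real_inner_comm _ _
    calc η * ⟪zstar - w, u t⟫ = η * ⟪u t, zstar - w⟫ := by rw [hsym]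
      _ ≤ ⟪w - zh t, zstar - w⟫ := h2
      _ ≤ ‖w - zh t‖ * ‖zstar - w‖ := h3
      _ ≤ (A + B) * D := by
          apply mul_le_mul h4 h5 (norm_nonneg _) (by linarith)
  have h1' : ⟪zstar - w, u t⟫ ≤ (A + B) * D / η := by
    rw [le_div_iff₀ hη]; linarith [h1]
  -- second term
  have h2' : ⟪w - z t, u t⟫ ≤ M * B := by
    calc ⟪w - z t, u t⟫ ≤ ‖w - z t‖ * ‖u t‖ := real_inner_le_norm _ _
      _ = B * ‖u t‖ := by rw [norm_sub_rev]
      _ ≤ B * M := mul_le_mul_of_nonneg_left hMt hB0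
      _ = M * B := by ring
  rw [hdecomp]
  have hDη : (0:ℝ) ≤ D / η := div_nonneg hD0 hη.le
  have : (A + B) * D / η = D / η * (A + B) := by field_simp
  nlinarith [mul_nonneg hM0 hA0]
end

section
/- Bounded second-order path length under the average generalized Minty property: let X = ∏_{r=1}^d Z_r, F an L-Lipschitz operator with block norms bounded by B_F, and suppose the average (α, ℓ, h)-generalized Minty property holds. Run the modified optimistic gradient descent x⁽ᵗ⁾ = Proj_X(x̂⁽ᵗ⁾ − η A(x⁽ᵗ⁻¹⁾)∘F(x⁽ᵗ⁻¹⁾)), x̂⁽ᵗ⁺¹⁾ = Proj_X(x̂⁽ᵗ⁾ − η A(x⁽ᵗ⁾)∘F(x⁽ᵗ⁾)) with η ≤ (1/4)√(ℓ/(h³L² + h B_F² α² d)). Then Σ_{t=1}^T (‖x⁽ᵗ⁾ − x̂⁽ᵗ⁾‖₂² + ‖x⁽ᵗ⁾ − x̂⁽ᵗ⁺¹⁾‖₂²) ≤ 2 D_X² h / ℓ for every T. -/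
open Finset RealInnerProductSpace

/-!
Weight the inner product by `W = w(x*)`, where `x*` is the Minty point of the iterates. Because `X`
is a product of blocks and `W` is constant on blocks, the Euclidean projection onto `X` still
satisfies the variational inequality of the weighted geometry. The two projection steps of
optimistic gradient descent then give the three-point inequality
`η⟨x⁽ᵗ⁾ - x*, u⁽ᵗ⁾⟩_W ≤ ½‖x̂⁽ᵗ⁾ - x*‖²_W - ½‖x̂⁽ᵗ⁺¹⁾ - x*‖²_W - ½‖x⁽ᵗ⁾ - x̂⁽ᵗ⁾‖²_W - ½‖x⁽ᵗ⁾ - x̂⁽ᵗ⁺¹⁾‖²_W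
+ η⟨u⁽ᵗ⁾ - u⁽ᵗ⁻¹⁾, x⁽ᵗ⁾ - x̂⁽ᵗ⁺¹⁾⟩_W`, where `u = A∘F`. By nonexpansiveness of the projection and
the Lipschitz bound `‖u⁽ᵗ⁾ - u⁽ᵗ⁻¹⁾‖² ≤ 2(h²L² + B_F²α²d)‖x⁽ᵗ⁾ - x⁽ᵗ⁻¹⁾‖²`, the step-size condition
makes the cross term at most `ℓ/4 (‖x⁽ᵗ⁾ - x̂⁽ᵗ⁾‖² + ‖x⁽ᵗ⁻¹⁾ - x̂⁽ᵗ⁾‖²)`. Summing over `t`, the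
Minty property makes the left side nonnegative, the first two terms telescope to at most
`½ h D_X²`, and the remaining terms leave `ℓ/4` times the path length.
-/

section Projection

variable {E : Type*} [NormedAddCommGroup E] [InnerProductSpace ℝ E] {X : Set E} {proj : E → E}

theorem inner_sub_proj_nonpos (hXc : Convex ℝ X)
    (hproj : ∀ v, proj v ∈ X ∧ ∀ y ∈ X, ‖v - proj v‖ ≤ ‖v - y‖) (v : E) {y : E} (hy : y ∈ X) :
    ⟪v - proj v, y - proj v⟫ ≤ 0 := by
  have : Nonempty X := ⟨⟨proj v, (hproj v).1⟩⟩
  refine (norm_eq_iInf_iff_real_inner_le_zero hXc (hproj v).1).mp ?_ y hy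
  exact le_antisymm (le_ciInf fun z : X => (hproj v).2 z z.2)
    (ciInf_le ⟨0, by rintro _ ⟨z, rfl⟩; exact norm_nonneg _⟩ (⟨proj v, (hproj v).1⟩ : X))

theorem norm_proj_sub_proj_le (hXc : Convex ℝ X)
    (hproj : ∀ v, proj v ∈ X ∧ ∀ y ∈ X, ‖v - proj v‖ ≤ ‖v - y‖) (v v' : E) :
    ‖proj v - proj v'‖ ≤ ‖v - v'‖ := by
  have h₁ := inner_sub_proj_nonpos hXc hproj v (hproj v').1
  have h₂ := inner_sub_proj_nonpos hXc hproj v' (hproj v).1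
  have key : ‖proj v - proj v'‖ ^ 2 ≤ ⟪v - v', proj v - proj v'⟫ := by
    have : ⟪v - v', proj v - proj v'⟫ - ‖proj v - proj v'‖ ^ 2 =
        -⟪v - proj v, proj v' - proj v⟫ - ⟪v' - proj v', proj v - proj v'⟫ := by
      rw [← real_inner_self_eq_norm_sq]
      simp only [inner_sub_left, inner_sub_right, real_inner_comm]
      ring
    linarith
  nlinarith [key.trans (real_inner_le_norm _ _), norm_nonneg (proj v - proj v'),
    norm_nonneg (v - v')]

theorem norm_proj_sub_smul_sub_proj_sub_smul_le (hXc : Convex ℝ X)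
    (hproj : ∀ v, proj v ∈ X ∧ ∀ y ∈ X, ‖v - proj v‖ ≤ ‖v - y‖) (z U U' : E) {η : ℝ}
    (hη : 0 ≤ η) : ‖proj (z - η • U') - proj (z - η • U)‖ ≤ η * ‖U - U'‖ := by
  refine (norm_proj_sub_proj_le hXc hproj _ _).trans_eq ?_
  rw [sub_sub_sub_cancel_left, ← smul_sub, norm_smul, Real.norm_of_nonneg hη]

end Projection

def blockProduct {β γ : Type*} (Z : β → Set (γ → ℝ)) : Set (EuclideanSpace ℝ (β × γ)) :=
  {x | ∀ r, (fun j => x (r, j)) ∈ Z r}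

def weightedInner {ι : Type*} [Fintype ι] (W : ι → ℝ) (v y : EuclideanSpace ℝ ι) : ℝ :=
  ∑ p, W p * (v p * y p)

section Weighted

variable {ι : Type*} [Fintype ι] {W : ι → ℝ}

theorem weightedInner_self_nonneg (hW : ∀ p, 0 ≤ W p) (v : EuclideanSpace ℝ ι) :
    0 ≤ weightedInner W v v :=
  sum_nonneg fun p _ => mul_nonneg (hW p) (mul_self_nonneg _)

theorem mul_norm_sq_le_weightedInner_self {ℓ : ℝ} (hW : ∀ p, ℓ ≤ W p) (v : EuclideanSpace ℝ ι) :
    ℓ * ‖v‖ ^ 2 ≤ weightedInner W v v := by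
  rw [EuclideanSpace.real_norm_sq_eq, mul_sum]
  exact sum_le_sum fun p _ => by rw [← sq]; exact mul_le_mul_of_nonneg_right (hW p) (sq_nonneg _)

theorem weightedInner_le {h : ℝ} (hW₀ : ∀ p, 0 ≤ W p) (hW : ∀ p, W p ≤ h) (hh : 0 ≤ h)
    (v y : EuclideanSpace ℝ ι) : weightedInner W v y ≤ h * (‖v‖ * ‖y‖) := by
  calc weightedInner W v y ≤ ∑ p, h * (‖v p‖ * ‖y p‖) := by
        refine sum_le_sum fun p _ => ?_
        rw [← norm_mul]
        exact (mul_le_mul_of_nonneg_left (Real.le_norm_self _) (hW₀ p)).trans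
          (mul_le_mul_of_nonneg_right (hW p) (norm_nonneg _))
    _ ≤ h * (‖v‖ * ‖y‖) := by
        rw [← mul_sum, EuclideanSpace.norm_eq, EuclideanSpace.norm_eq]
        exact mul_le_mul_of_nonneg_left (Real.sum_mul_le_sqrt_mul_sqrt _ _ _) hh

end Weighted

section Block

variable {β γ : Type*} [Fintype β] [Fintype γ] {Z : β → Set (γ → ℝ)}
  {proj : EuclideanSpace ℝ (β × γ) → EuclideanSpace ℝ (β × γ)}

/-- Replacing only block `r` of `proj v` by that of `y` stays in the product set, so the Euclidean
projection onto a product set is optimal block by block; hence it also satisfies the variational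
inequality of any block-constant reweighting of the inner product. -/
theorem sum_block_sub_proj_mul_nonpos (hXc : Convex ℝ (blockProduct Z))
    (hproj : ∀ v, proj v ∈ blockProduct Z ∧ ∀ y ∈ blockProduct Z, ‖v - proj v‖ ≤ ‖v - y‖)
    (v : EuclideanSpace ℝ (β × γ)) {y : EuclideanSpace ℝ (β × γ)} (hy : y ∈ blockProduct Z)
    (r : β) : ∑ j, (v - proj v) (r, j) * (y - proj v) (r, j) ≤ 0 := by
  classical
  let y' : EuclideanSpace ℝ (β × γ) := WithLp.toLp 2 fun p => if p.1 = r then y p else proj v p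
  have hy' : y' ∈ blockProduct Z := by
    intro r'
    by_cases hr : r' = r
    · subst hr; simpa [y'] using hy r'
    · simpa [y', hr] using (hproj v).1 r'
  have hvi := inner_sub_proj_nonpos hXc hproj v hy'
  rw [PiLp.inner_apply, Fintype.sum_prod_type,
    sum_eq_single r fun r' _ hr => sum_eq_zero fun j _ => by simp [y', hr]] at hvi
  · simpa [y', mul_comm] using hvi
  · simp

theorem weightedInner_sub_proj_nonpos {W : β → ℝ} (hW : ∀ r, 0 ≤ W r)
    (hXc : Convex ℝ (blockProduct Z))
    (hproj : ∀ v, proj v ∈ blockProduct Z ∧ ∀ y ∈ blockProduct Z, ‖v - proj v‖ ≤ ‖v - y‖)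
    (v : EuclideanSpace ℝ (β × γ)) {y : EuclideanSpace ℝ (β × γ)} (hy : y ∈ blockProduct Z) :
    weightedInner (fun p => W p.1) (v - proj v) (y - proj v) ≤ 0 := by
  rw [weightedInner, Fintype.sum_prod_type]
  refine sum_nonpos fun r _ => ?_
  simpa only [mul_sum] using
    mul_nonpos_of_nonneg_of_nonpos (hW r) (sum_block_sub_proj_mul_nonpos hXc hproj v hy r)

end Block

section Step

variable {ι : Type*} [Fintype ι] {W : ι → ℝ}

theorem optimistic_three_point_le {η : ℝ} {x xh xh' s U U' : EuclideanSpace ℝ ι}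
    (hA : weightedInner W (xh - η • U - xh') (s - xh') ≤ 0)
    (hB : weightedInner W (xh - η • U' - x) (xh' - x) ≤ 0) :
    η * weightedInner W (x - s) U ≤
      (weightedInner W (xh - s) (xh - s) - weightedInner W (xh' - s) (xh' - s)
        - weightedInner W (x - xh) (x - xh) - weightedInner W (x - xh') (x - xh')) / 2
      + η * weightedInner W (U - U') (x - xh') := by
  have key : η * weightedInner W (x - s) U =
      weightedInner W (xh - η • U - xh') (s - xh') + weightedInner W (xh - η • U' - x) (xh' - x)
      + (weightedInner W (xh - s) (xh - s) - weightedInner W (xh' - s) (xh' - s)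
        - weightedInner W (x - xh) (x - xh) - weightedInner W (x - xh') (x - xh')) / 2
      + η * weightedInner W (U - U') (x - xh') := by
    simp only [weightedInner, mul_sum, sum_div, ← sum_add_distrib, ← sum_sub_distrib,
      PiLp.sub_apply, PiLp.smul_apply, smul_eq_mul]
    exact sum_congr rfl fun p _ => by ring
  linarith

theorem optimistic_step_le {ℓ h η K : ℝ} (hW : ∀ p, ℓ ≤ W p ∧ W p ≤ h) (hℓ : 0 ≤ ℓ)
    (hh : 0 ≤ h) (hη : 0 ≤ η) (hK : 0 ≤ K) (hηK : 16 * η ^ 2 * (h * K) ≤ ℓ)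
    {xp x xh xh' s U U' : EuclideanSpace ℝ ι}
    (hA : weightedInner W (xh - η • U - xh') (s - xh') ≤ 0)
    (hB : weightedInner W (xh - η • U' - x) (xh' - x) ≤ 0)
    (hx : ‖x - xh'‖ ≤ η * ‖U - U'‖) (hU : ‖U - U'‖ ^ 2 ≤ 2 * K * ‖x - xp‖ ^ 2) :
    η * weightedInner W (x - s) U + ℓ / 2 * (‖x - xh‖ ^ 2 + ‖x - xh'‖ ^ 2) ≤
      (weightedInner W (xh - s) (xh - s) - weightedInner W (xh' - s) (xh' - s)) / 2
      + ℓ / 4 * (‖x - xh‖ ^ 2 + ‖xp - xh‖ ^ 2) := by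
  have hW₀ p : 0 ≤ W p := hℓ.trans (hW p).1
  have hxp : ‖x - xp‖ ^ 2 ≤ 2 * (‖x - xh‖ ^ 2 + ‖xp - xh‖ ^ 2) := by
    have := norm_sub_le_norm_sub_add_norm_sub x xh xp
    rw [norm_sub_rev xh xp] at this
    exact (pow_le_pow_left₀ (norm_nonneg _) this 2).trans add_sq_le
  have hcross : η * weightedInner W (U - U') (x - xh') ≤ ℓ / 4 * (‖x - xh‖ ^ 2 + ‖xp - xh‖ ^ 2) :=
    calc η * weightedInner W (U - U') (x - xh')
        ≤ η * (h * (‖U - U'‖ * (η * ‖U - U'‖))) := by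
          gcongr
          exact (weightedInner_le hW₀ (fun p => (hW p).2) hh _ _).trans (by gcongr)
      _ = η ^ 2 * h * ‖U - U'‖ ^ 2 := by ring
      _ ≤ η ^ 2 * h * (2 * K * (2 * (‖x - xh‖ ^ 2 + ‖xp - xh‖ ^ 2))) := by
          gcongr
          exact hU.trans (by gcongr)
      _ = 16 * η ^ 2 * (h * K) / 4 * (‖x - xh‖ ^ 2 + ‖xp - xh‖ ^ 2) := by ring
      _ ≤ ℓ / 4 * (‖x - xh‖ ^ 2 + ‖xp - xh‖ ^ 2) := by gcongr
  have hG := mul_norm_sq_le_weightedInner_self (fun p => (hW p).1) (x - xh)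
  have hB' := mul_norm_sq_le_weightedInner_self (fun p => (hW p).1) (x - xh')
  linarith [optimistic_three_point_le hA hB]

end Step

theorem norm_sub_sq_le_of_blockwise_scaling {β γ V : Type*} [Fintype β] [Fintype γ]
    [SeminormedAddCommGroup V] {F : V → EuclideanSpace ℝ (β × γ)} {a : β → V → ℝ}
    {L BF α h : ℝ} {x y : V} {U U' : EuclideanSpace ℝ (β × γ)}
    (hF : ‖F x - F y‖ ≤ L * ‖x - y‖) (ha : ∀ r, |a r x - a r y| ≤ α * ‖x - y‖)
    (hax : ∀ r, |a r x| ≤ h) (hFy : ∀ r, √(∑ j, F y (r, j) ^ 2) ≤ BF)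
    (hU : ∀ p, U p = a p.1 x * F x p) (hU' : ∀ p, U' p = a p.1 y * F y p) :
    ‖U - U'‖ ^ 2 ≤ 2 * (h ^ 2 * L ^ 2 + BF ^ 2 * α ^ 2 * Fintype.card β) * ‖x - y‖ ^ 2 := by
  have hcoord p : (U - U') p ^ 2 ≤
      2 * h ^ 2 * (F x - F y) p ^ 2 + 2 * (α * ‖x - y‖) ^ 2 * F y p ^ 2 := by
    have e : (U - U') p = a p.1 x * (F x - F y) p + (a p.1 x - a p.1 y) * F y p := by
      simp only [PiLp.sub_apply, hU, hU']; ring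
    have h₁ : a p.1 x ^ 2 ≤ h ^ 2 := sq_le_sq' (abs_le.mp (hax p.1)).1 (abs_le.mp (hax p.1)).2
    have h₂ : (a p.1 x - a p.1 y) ^ 2 ≤ (α * ‖x - y‖) ^ 2 :=
      sq_le_sq' (abs_le.mp (ha p.1)).1 (abs_le.mp (ha p.1)).2
    rw [e]
    refine add_sq_le.trans ?_
    nlinarith [mul_le_mul_of_nonneg_right h₁ (sq_nonneg ((F x - F y) p)),
      mul_le_mul_of_nonneg_right h₂ (sq_nonneg (F y p))]
  have hFL : ∑ p, (F x - F y) p ^ 2 ≤ L ^ 2 * ‖x - y‖ ^ 2 := by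
    rw [← EuclideanSpace.real_norm_sq_eq, ← mul_pow]
    exact pow_le_pow_left₀ (norm_nonneg _) hF 2
  have hFB : ∑ p, F y p ^ 2 ≤ Fintype.card β * BF ^ 2 := by
    rw [Fintype.sum_prod_type, ← nsmul_eq_mul, ← card_univ]
    refine sum_le_card_nsmul _ _ _ fun r _ => ?_
    exact (Real.sqrt_le_iff.mp (hFy r)).2
  rw [EuclideanSpace.real_norm_sq_eq]
  refine (sum_le_sum fun p _ => hcoord p).trans ?_
  rw [sum_add_distrib, ← mul_sum, ← mul_sum]
  nlinarith [mul_le_mul_of_nonneg_left hFL (by positivity : (0 : ℝ) ≤ 2 * h ^ 2),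
    mul_le_mul_of_nonneg_left hFB (by positivity : (0 : ℝ) ≤ 2 * (α * ‖x - y‖) ^ 2)]

theorem pos_and_sixteen_mul_sq_mul_le {η ℓ Q : ℝ} (hη : 0 < η) (hℓ : 0 ≤ ℓ)
    (hηle : η ≤ 1 / 4 * √(ℓ / Q)) : 0 < Q ∧ 16 * η ^ 2 * Q ≤ ℓ := by
  have hpos : 0 < ℓ / Q := Real.sqrt_pos.mp (by linarith)
  have hQ : 0 < Q := by
    rcases div_pos_iff.mp hpos with h | h
    · exact h.2
    · linarith [h.1]
  refine ⟨hQ, ?_⟩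
  have : (4 * η) ^ 2 ≤ ℓ / Q := by
    rw [← Real.sq_sqrt hpos.le]
    exact pow_le_pow_left₀ (by linarith) (by linarith) 2
  rw [le_div_iff₀ hQ] at this
  linarith

theorem sum_Icc_le_of_optimistic_step {ℓ : ℝ} (hℓ : 0 < ℓ) {Φ G B M : ℕ → ℝ}
    (hΦ : ∀ t, 0 ≤ Φ t) (hB : ∀ t, 0 ≤ B t) (hB₀ : B 0 = 0)
    (hstep : ∀ t, M (t + 1) + ℓ / 2 * (G (t + 1) + B (t + 1)) ≤
      (Φ (t + 1) - Φ (t + 2)) / 2 + ℓ / 4 * (G (t + 1) + B t))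
    {T : ℕ} (hM : 0 ≤ ∑ t : Fin T, M (t + 1)) :
    ∑ t ∈ Icc 1 T, (G t + B t) ≤ 2 * Φ 1 / ℓ := by
  rw [Fin.sum_univ_eq_sum_range (fun t => M (t + 1)), range_eq_Ico, sum_Ico_add' M, zero_add,
    Ico_add_one_right_eq_Icc] at hM
  -- `ℓ / 4 * B n` is the credit that pays for the `B t` term on the right of the next step.
  have key n : ∑ t ∈ Icc 1 n, M t + ℓ / 4 * (∑ t ∈ Icc 1 n, (G t + B t) + B n) ≤
      (Φ 1 - Φ (n + 1)) / 2 := by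
    induction n with
    | zero => simp [hB₀]
    | succ n ih =>
      rw [sum_Icc_succ_top (by omega), sum_Icc_succ_top (by omega)]
      linarith [hstep n]
  rw [le_div_iff₀ hℓ]
  nlinarith [key T, hΦ (T + 1), mul_nonneg hℓ.le (hB T)]

theorem ogd_bounded_path_length_general {d m : ℕ}
    (Z : Fin d → Set (Fin m → ℝ))
    (X : Set (EuclideanSpace ℝ (Fin d × Fin m)))
    (hX : X = {x | ∀ r : Fin d, (fun j => x (r, j)) ∈ Z r})
    (hXc : Convex ℝ X)
    (F : EuclideanSpace ℝ (Fin d × Fin m) → EuclideanSpace ℝ (Fin d × Fin m))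
    (L BF : ℝ) (hL : ∀ x y, ‖F x - F y‖ ≤ L * ‖x - y‖)
    (hBF : ∀ x ∈ X, ∀ r : Fin d, Real.sqrt (∑ j, (F x (r, j)) ^ 2) ≤ BF)
    (a w : Fin d → EuclideanSpace ℝ (Fin d × Fin m) → ℝ)
    (α ℓ h : ℝ) (hℓ : 0 < ℓ)
    (haLip : ∀ r x y, |a r x - a r y| ≤ α * ‖x - y‖)
    (hab : ∀ r, ∀ x ∈ X, ℓ ≤ a r x ∧ a r x ≤ h)
    (hwb : ∀ r, ∀ x ∈ X, ℓ ≤ w r x ∧ w r x ≤ h)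
    (hMinty : ∀ (T : ℕ) (xs : Fin T → EuclideanSpace ℝ (Fin d × Fin m)),
      (∀ t, xs t ∈ X) → ∃ xstar ∈ X,
        0 ≤ ∑ t, ∑ p : Fin d × Fin m,
              (xs t p - xstar p) * (F (xs t) p * a p.1 (xs t) * w p.1 xstar))
    (η D : ℝ) (hη : 0 < η)
    (hηle : η ≤ (1 / 4) * Real.sqrt (ℓ / (h ^ 3 * L ^ 2 + h * BF ^ 2 * α ^ 2 * d)))
    (hD : ∀ x ∈ X, ∀ y ∈ X, ‖x - y‖ ≤ D)
    (proj : EuclideanSpace ℝ (Fin d × Fin m) → EuclideanSpace ℝ (Fin d × Fin m))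
    (hproj : ∀ v, proj v ∈ X ∧ ∀ y ∈ X, ‖v - proj v‖ ≤ ‖v - y‖)
    (u x xh : ℕ → EuclideanSpace ℝ (Fin d × Fin m))
    (hu : ∀ t, ∀ p : Fin d × Fin m, u t p = a p.1 (x t) * F (x t) p)
    (hx0 : x 0 ∈ X) (hinit : xh 1 = x 0)
    (hxup : ∀ t, 1 ≤ t → x t = proj (xh t - η • u (t - 1)))
    (hxhup : ∀ t, 1 ≤ t → xh (t + 1) = proj (xh t - η • u t))
    (T : ℕ) :
    ∑ t ∈ Finset.Icc 1 T, (‖x t - xh t‖ ^ 2 + ‖x t - xh (t + 1)‖ ^ 2) ≤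
      2 * D ^ 2 * h / ℓ := by
  change X = blockProduct Z at hX
  subst hX
  obtain ⟨hQ, hηQ⟩ := pos_and_sixteen_mul_sq_mul_le hη hℓ.le hηle
  have hK : 0 ≤ h ^ 2 * L ^ 2 + BF ^ 2 * α ^ 2 * d := by positivity
  have hh : 0 < h := by nlinarith
  have hxX : ∀ t, x t ∈ blockProduct Z := by
    rintro (_ | t)
    exacts [hx0, hxup (t + 1) (by omega) ▸ (hproj _).1]
  have hxhX : ∀ t, xh (t + 1) ∈ blockProduct Z := by
    rintro (_ | t)
    exacts [hinit ▸ hx0, hxhup (t + 1) (by omega) ▸ (hproj _).1]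
  obtain ⟨xs, hxs, hM⟩ := hMinty T (fun t => x (t + 1)) fun t => hxX _
  set W : Fin d × Fin m → ℝ := fun p => w p.1 xs
  have hW p : ℓ ≤ W p ∧ W p ≤ h := hwb p.1 xs hxs
  have hW₀ p : 0 ≤ W p := hℓ.le.trans (hW p).1
  have hvi := weightedInner_sub_proj_nonpos (fun r => hℓ.le.trans (hwb r xs hxs).1) hXc hproj
  refine (sum_Icc_le_of_optimistic_step hℓ (M := fun t => η * weightedInner W (x t - xs) (u t))
    (fun t => weightedInner_self_nonneg hW₀ (xh t - xs))
    (fun t => sq_nonneg _) (by simp [hinit]) (fun t => ?_) ?_).trans ?_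
  · have hxt : x (t + 1) = proj (xh (t + 1) - η • u t) := by simpa using hxup (t + 1) (by omega)
    have hxht := hxhup (t + 1) (by omega)
    refine optimistic_step_le hW hℓ.le hh.le hη.le hK (hηQ.trans_eq' (by ring))
      (U' := u t) ?_ ?_ ?_ ?_
    · rw [hxht]; exact hvi _ hxs
    · rw [hxt, hxht]; exact hvi _ (hproj _).1
    · rw [hxt, hxht]; exact norm_proj_sub_smul_sub_proj_sub_smul_le hXc hproj _ _ _ hη.le
    · simpa using norm_sub_sq_le_of_blockwise_scaling (hL _ _) (fun r => haLip r _ _)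
        (fun r => abs_le.mpr ⟨by linarith [(hab r _ (hxX (t + 1))).1], (hab r _ (hxX _)).2⟩)
        (hBF _ (hxX t)) (hu (t + 1)) (hu t)
  · rw [← mul_sum]
    refine mul_nonneg hη.le (hM.trans_eq (sum_congr rfl fun t _ => ?_))
    simp only [weightedInner, PiLp.sub_apply, hu]
    exact sum_congr rfl fun p _ => by ring
  · have hΦ₁ : weightedInner W (xh 1 - xs) (xh 1 - xs) ≤ h * D ^ 2 :=
      calc weightedInner W (xh 1 - xs) (xh 1 - xs) ≤ h * (‖xh 1 - xs‖ * ‖xh 1 - xs‖) :=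
            weightedInner_le hW₀ (fun p => (hW p).2) hh.le _ _
        _ = h * ‖xh 1 - xs‖ ^ 2 := by ring
        _ ≤ h * D ^ 2 := by gcongr; exact hD _ (hxhX 0) _ hxs
    exact div_le_div_of_nonneg_right (by linarith) hℓ.le

/-- Bounded second-order path length for modified optimistic gradient descent under the
average `(α, ℓ, h)`-generalized Minty property on `X = ∏_{r=1}^d Z_r`:
`Σ_{t=1}^T (‖x⁽ᵗ⁾ − x̂⁽ᵗ⁾‖² + ‖x⁽ᵗ⁾ − x̂⁽ᵗ⁺¹⁾‖²) ≤ 2 D_X² h / ℓ`. -/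
theorem ogd_bounded_path_length {d m : ℕ}
    (Z : Fin d → Set (Fin m → ℝ))
    (X : Set (EuclideanSpace ℝ (Fin d × Fin m)))
    (hX : X = {x | ∀ r : Fin d, (fun j => x (r, j)) ∈ Z r})
    (hXc : Convex ℝ X) (hXk : IsCompact X)
    (F : EuclideanSpace ℝ (Fin d × Fin m) → EuclideanSpace ℝ (Fin d × Fin m))
    (L BF : ℝ) (hL : ∀ x y, ‖F x - F y‖ ≤ L * ‖x - y‖)
    (hBF : ∀ x ∈ X, ∀ r : Fin d, Real.sqrt (∑ j, (F x (r, j)) ^ 2) ≤ BF)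
    (a w : Fin d → EuclideanSpace ℝ (Fin d × Fin m) → ℝ)
    (α ℓ h : ℝ) (hℓ : 0 < ℓ)
    (haLip : ∀ r x y, |a r x - a r y| ≤ α * ‖x - y‖)
    (hab : ∀ r, ∀ x ∈ X, ℓ ≤ a r x ∧ a r x ≤ h)
    (hwb : ∀ r, ∀ x ∈ X, ℓ ≤ w r x ∧ w r x ≤ h)
    (hMinty : ∀ (T : ℕ) (xs : Fin T → EuclideanSpace ℝ (Fin d × Fin m)),
      (∀ t, xs t ∈ X) → ∃ xstar ∈ X,
        0 ≤ ∑ t, ∑ p : Fin d × Fin m,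
              (xs t p - xstar p) * (F (xs t) p * a p.1 (xs t) * w p.1 xstar))
    (η D : ℝ) (hη : 0 < η)
    (hηle : η ≤ (1 / 4) * Real.sqrt (ℓ / (h ^ 3 * L ^ 2 + h * BF ^ 2 * α ^ 2 * d)))
    (hD : ∀ x ∈ X, ∀ y ∈ X, ‖x - y‖ ≤ D)
    (proj : EuclideanSpace ℝ (Fin d × Fin m) → EuclideanSpace ℝ (Fin d × Fin m))
    (hproj : ∀ v, proj v ∈ X ∧ ∀ y ∈ X, ‖v - proj v‖ ≤ ‖v - y‖)
    (u x xh : ℕ → EuclideanSpace ℝ (Fin d × Fin m))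
    (hu : ∀ t, ∀ p : Fin d × Fin m, u t p = a p.1 (x t) * F (x t) p)
    (hx0 : x 0 ∈ X) (hinit : xh 1 = x 0)
    (hxup : ∀ t, 1 ≤ t → x t = proj (xh t - η • u (t - 1)))
    (hxhup : ∀ t, 1 ≤ t → xh (t + 1) = proj (xh t - η • u t))
    (T : ℕ) :
    ∑ t ∈ Finset.Icc 1 T, (‖x t - xh t‖ ^ 2 + ‖x t - xh (t + 1)‖ ^ 2) ≤
      2 * D ^ 2 * h / ℓ :=
  ogd_bounded_path_length_general Z X hX hXc F L BF hL hBF a w α ℓ h hℓ haLip hab hwb hMinty η D hη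
    hηle hD proj hproj u x xh hu hx0 hinit hxup hxhup T
end

section
/- Value difference (performance difference) lemma: for any joint policy π, player i, and alternative policy π_i', V_i^{π_i', π_{−i}}(ρ) − V_i^{π}(ρ) = Σ_{s ∈ S} d̃_ρ^{π_i', π_{−i}}[s] Σ_{a_i ∈ A_i} ( x'_{i,s}[a_i] − x_{i,s}[a_i] ) · E_{a_{−i} ~ π_{−i}(·|s)}[ Q_i^π(s, a_i, a_{−i}) ]. -/
open Finset

section MarkovGame

variable {S : Type} [Fintype S] [DecidableEq S] {n : ℕ}

/-- Probability of the joint action `a` at state `s` under the product policy `x`. -/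
noncomputable def MGjointProb (A : Fin n → Type) [∀ i, Fintype (A i)]
    (x : ∀ i, S → A i → ℝ) (s : S) (a : ∀ i, A i) : ℝ :=
  ∏ i, x i s (a i)

/-- One-step pushforward of a (sub)distribution `μ` over states under policy `x`
and transition kernel `P`. -/
noncomputable def MGstep (A : Fin n → Type) [∀ i, Fintype (A i)]
    (P : S → (∀ i, A i) → S → ℝ) (x : ∀ i, S → A i → ℝ) (μ : S → ℝ) : S → ℝ :=
  fun s' => ∑ s, ∑ a : ∀ i, A i, μ s * MGjointProb A x s a * P s a s'

/-- Unnormalized state visitation measure `d̃_ρ^π[s] = Σ_{h≥0} P^π(s_h = s | s₀ ~ ρ)`. -/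
noncomputable def MGocc (A : Fin n → Type) [∀ i, Fintype (A i)]
    (P : S → (∀ i, A i) → S → ℝ) (x : ∀ i, S → A i → ℝ) (ρ : S → ℝ) (s : S) : ℝ :=
  ∑' h : ℕ, (MGstep A P x)^[h] ρ s

/-- Value of player `i`: `V_i^π(ρ) = Σ_{h≥0} E[R_i(s_h, a_h)]`. -/
noncomputable def MGval (A : Fin n → Type) [∀ i, Fintype (A i)]
    (P : S → (∀ i, A i) → S → ℝ) (R : Fin n → S → (∀ i, A i) → ℝ)
    (i : Fin n) (x : ∀ i, S → A i → ℝ) (ρ : S → ℝ) : ℝ :=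
  ∑' h : ℕ, ∑ s, ((MGstep A P x)^[h] ρ) s * ∑ a : ∀ i, A i, MGjointProb A x s a * R i s a

/-- `Q`-function of player `i`: `Q_i^π(s,a) = R_i(s,a) + Σ_{s'} P(s'|s,a) V_i^π(δ_{s'})`. -/
noncomputable def MGQ (A : Fin n → Type) [∀ i, Fintype (A i)]
    (P : S → (∀ i, A i) → S → ℝ) (R : Fin n → S → (∀ i, A i) → ℝ)
    (i : Fin n) (x : ∀ i, S → A i → ℝ) (s : S) (a : ∀ i, A i) : ℝ :=
  R i s a + ∑ s', P s a s' * MGval A P R i x (fun t => if t = s' then (1 : ℝ) else 0)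

end MarkovGame

section Aux
variable {S : Type} [Fintype S] [DecidableEq S] {n : ℕ}
  (A : Fin n → Type) [∀ i, Fintype (A i)]
  (P : S → (∀ i, A i) → S → ℝ) (R : Fin n → S → (∀ i, A i) → ℝ)

/-- point mass at `s`. -/
noncomputable def MGdelta (s : S) : S → ℝ := fun t => if t = s then (1 : ℝ) else 0

lemma MG_jp_nonneg (x : ∀ i, S → A i → ℝ) (hx : ∀ i s, x i s ∈ stdSimplex ℝ (A i))
    (s : S) (a : ∀ i, A i) : 0 ≤ MGjointProb A x s a :=
  Finset.prod_nonneg fun j _ => (hx j s).1 _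

lemma MG_jp_sum (x : ∀ i, S → A i → ℝ) (hx : ∀ i s, x i s ∈ stdSimplex ℝ (A i)) (s : S) :
    ∑ a : ∀ i, A i, MGjointProb A x s a = 1 := by
  unfold MGjointProb
  rw [← Fintype.piFinset_univ, ← Finset.prod_univ_sum]
  exact Finset.prod_eq_one fun j _ => (hx j s).2

lemma MG_step_nonneg (x : ∀ i, S → A i → ℝ) (hx : ∀ i s, x i s ∈ stdSimplex ℝ (A i))
    (hP : ∀ s a s', 0 ≤ P s a s') (μ : S → ℝ) (hμ : ∀ s, 0 ≤ μ s) (s' : S) :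
    0 ≤ MGstep A P x μ s' :=
  Finset.sum_nonneg fun s _ => Finset.sum_nonneg fun a _ =>
    mul_nonneg (mul_nonneg (hμ s) (MG_jp_nonneg A x hx s a)) (hP s a s')

lemma MG_step_mass {ζ : ℝ}
    (hPmass : ∀ s a, ∑ s', P s a s' ≤ 1 - ζ)
    (x : ∀ i, S → A i → ℝ) (hx : ∀ i s, x i s ∈ stdSimplex ℝ (A i))
    (μ : S → ℝ) (hμ : ∀ s, 0 ≤ μ s) :
    ∑ s', MGstep A P x μ s' ≤ (1 - ζ) * ∑ s, μ s := by
  unfold MGstep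
  calc ∑ s', ∑ s, ∑ a : ∀ i, A i, μ s * MGjointProb A x s a * P s a s'
      = ∑ s, ∑ a : ∀ i, A i, μ s * MGjointProb A x s a * ∑ s', P s a s' := by
        rw [Finset.sum_comm]
        exact Finset.sum_congr rfl fun s _ => by
          rw [Finset.sum_comm]
          exact Finset.sum_congr rfl fun a _ => (Finset.mul_sum _ _ _).symm
    _ ≤ ∑ s, ∑ a : ∀ i, A i, μ s * MGjointProb A x s a * (1 - ζ) := by
        refine Finset.sum_le_sum fun s _ => Finset.sum_le_sum fun a _ => ?_
        exact mul_le_mul_of_nonneg_left (hPmass s a)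
          (mul_nonneg (hμ s) (MG_jp_nonneg A x hx s a))
    _ = ∑ s, μ s * (1 - ζ) := Finset.sum_congr rfl fun s _ => by
        rw [← Finset.sum_mul, ← Finset.mul_sum, MG_jp_sum A x hx s, mul_one]
    _ = (1 - ζ) * ∑ s, μ s := by rw [← Finset.sum_mul, mul_comm]

lemma MG_iter_nonneg (x : ∀ i, S → A i → ℝ) (hx : ∀ i s, x i s ∈ stdSimplex ℝ (A i))
    (hP : ∀ s a s', 0 ≤ P s a s') (μ : S → ℝ) (hμ : ∀ s, 0 ≤ μ s) (h : ℕ) (s : S) :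
    0 ≤ (MGstep A P x)^[h] μ s := by
  induction h generalizing s with
  | zero => exact hμ s
  | succ h ih =>
      rw [Function.iterate_succ_apply']
      exact MG_step_nonneg A P x hx hP _ ih s

lemma MG_iter_mass {ζ : ℝ} (hζ1 : ζ ≤ 1)
    (hP : ∀ s a s', 0 ≤ P s a s') (hPmass : ∀ s a, ∑ s', P s a s' ≤ 1 - ζ)
    (x : ∀ i, S → A i → ℝ) (hx : ∀ i s, x i s ∈ stdSimplex ℝ (A i))
    (μ : S → ℝ) (hμ : ∀ s, 0 ≤ μ s) (h : ℕ) :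
    ∑ s, (MGstep A P x)^[h] μ s ≤ (1 - ζ) ^ h * ∑ s, μ s := by
  induction h with
  | zero => simp
  | succ h ih =>
      have h0 : (0:ℝ) ≤ 1 - ζ := by linarith
      calc ∑ s, (MGstep A P x)^[h+1] μ s
          = ∑ s, MGstep A P x ((MGstep A P x)^[h] μ) s := by
            simp [Function.iterate_succ_apply']
        _ ≤ (1 - ζ) * ∑ s, (MGstep A P x)^[h] μ s :=
            MG_step_mass A P hPmass x hx _ (fun s => MG_iter_nonneg A P x hx hP μ hμ h s)
        _ ≤ (1 - ζ) * ((1 - ζ) ^ h * ∑ s, μ s) := mul_le_mul_of_nonneg_left ih h0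
        _ = (1 - ζ) ^ (h+1) * ∑ s, μ s := by ring

lemma MG_iter_ptwise {ζ : ℝ} (hζ1 : ζ ≤ 1)
    (hP : ∀ s a s', 0 ≤ P s a s') (hPmass : ∀ s a, ∑ s', P s a s' ≤ 1 - ζ)
    (x : ∀ i, S → A i → ℝ) (hx : ∀ i s, x i s ∈ stdSimplex ℝ (A i))
    (μ : S → ℝ) (hμ : ∀ s, 0 ≤ μ s) (h : ℕ) (t : S) :
    (MGstep A P x)^[h] μ t ≤ (1 - ζ) ^ h * ∑ s, μ s :=
  le_trans (Finset.single_le_sum (f := fun s => (MGstep A P x)^[h] μ s)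
    (fun s _ => MG_iter_nonneg A P x hx hP μ hμ h s) (Finset.mem_univ t))
    (MG_iter_mass A P hζ1 hP hPmass x hx μ hμ h)

end Aux

set_option linter.unusedSectionVars false

section Aux2
variable {S : Type} [Fintype S] [DecidableEq S] {n : ℕ}
  (A : Fin n → Type) [∀ i, Fintype (A i)]
  (P : S → (∀ i, A i) → S → ℝ) (R : Fin n → S → (∀ i, A i) → ℝ)

lemma MG_step_lin (x : ∀ i, S → A i → ℝ) (c : S → ℝ) (g : S → S → ℝ) (t : S) :
    MGstep A P x (fun u => ∑ s, c s * g s u) t = ∑ s, c s * MGstep A P x (g s) t := by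
  unfold MGstep
  have e : ∀ u (a : ∀ i, A i), (∑ s, c s * g s u) * MGjointProb A x u a * P u a t
      = ∑ s, c s * (g s u * MGjointProb A x u a * P u a t) := by
    intro u a
    rw [Finset.sum_mul, Finset.sum_mul]
    exact Finset.sum_congr rfl fun s _ => by ring
  simp_rw [e, Finset.mul_sum]
  calc ∑ u, ∑ a : ∀ i, A i, ∑ s, c s * (g s u * MGjointProb A x u a * P u a t)
      = ∑ u, ∑ s, ∑ a : ∀ i, A i, c s * (g s u * MGjointProb A x u a * P u a t) :=
        Finset.sum_congr rfl fun u _ => Finset.sum_comm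
    _ = ∑ s, ∑ u, ∑ a : ∀ i, A i, c s * (g s u * MGjointProb A x u a * P u a t) :=
        Finset.sum_comm

lemma MG_iter_lin (x : ∀ i, S → A i → ℝ) (ρ : S → ℝ) (h : ℕ) (t : S) :
    (MGstep A P x)^[h] ρ t = ∑ s, ρ s * (MGstep A P x)^[h] (MGdelta s) t := by
  induction h generalizing t with
  | zero => simp [MGdelta, mul_ite, Finset.sum_ite_eq]
  | succ h ih =>
      rw [Function.iterate_succ_apply']
      have e : (MGstep A P x)^[h] ρ = fun u => ∑ s, ρ s * (MGstep A P x)^[h] (MGdelta s) u :=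
        funext fun u => ih u
      rw [e, MG_step_lin]
      exact Finset.sum_congr rfl fun s _ => by rw [Function.iterate_succ_apply']

lemma MG_summable_bound {f : ℕ → ℝ} {C r : ℝ} (hr0 : 0 ≤ r) (hr1 : r < 1)
    (hf : ∀ h, |f h| ≤ C * r ^ h) : Summable f :=
  Summable.of_abs (Summable.of_nonneg_of_le (fun _ => abs_nonneg _) hf
    ((summable_geometric_of_lt_one hr0 hr1).mul_left C))

/-- `∑_a π(a|s) R_i(s,a)`. -/
noncomputable def MGrbar (i : Fin n) (x : ∀ i, S → A i → ℝ) (s : S) : ℝ :=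
  ∑ a : ∀ i, A i, MGjointProb A x s a * R i s a

lemma MG_rbar_bound (i : Fin n) (x : ∀ i, S → A i → ℝ)
    (hx : ∀ i s, x i s ∈ stdSimplex ℝ (A i))
    (hR : ∀ i s a, R i s a ∈ Set.Icc (-1 : ℝ) 1) (s : S) :
    |MGrbar A R i x s| ≤ 1 := by
  unfold MGrbar
  calc |∑ a : ∀ i, A i, MGjointProb A x s a * R i s a|
      ≤ ∑ a : ∀ i, A i, |MGjointProb A x s a * R i s a| := Finset.abs_sum_le_sum_abs _ _
    _ ≤ ∑ a : ∀ i, A i, MGjointProb A x s a := by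
        refine Finset.sum_le_sum fun a _ => ?_
        rw [abs_mul, abs_of_nonneg (MG_jp_nonneg A x hx s a)]
        have : |R i s a| ≤ 1 := abs_le.2 ⟨(hR i s a).1, (hR i s a).2⟩
        calc MGjointProb A x s a * |R i s a| ≤ MGjointProb A x s a * 1 :=
              mul_le_mul_of_nonneg_left this (MG_jp_nonneg A x hx s a)
          _ = MGjointProb A x s a := mul_one _
    _ = 1 := MG_jp_sum A x hx s

lemma MG_val_eq (i : Fin n) (x : ∀ i, S → A i → ℝ) (ρ : S → ℝ) :
    MGval A P R i x ρ = ∑' h : ℕ, ∑ s, ((MGstep A P x)^[h] ρ) s * MGrbar A R i x s := rfl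

lemma MG_term_bound {ζ : ℝ} (hζ1 : ζ ≤ 1)
    (hP : ∀ s a s', 0 ≤ P s a s') (hPmass : ∀ s a, ∑ s', P s a s' ≤ 1 - ζ)
    (hR : ∀ i s a, R i s a ∈ Set.Icc (-1 : ℝ) 1)
    (i : Fin n) (x : ∀ i, S → A i → ℝ) (hx : ∀ i s, x i s ∈ stdSimplex ℝ (A i))
    (ρ : S → ℝ) (hρ : ∀ s, 0 ≤ ρ s) (h : ℕ) :
    |∑ s, ((MGstep A P x)^[h] ρ) s * MGrbar A R i x s| ≤ (∑ s, ρ s) * (1 - ζ) ^ h := by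
  calc |∑ s, ((MGstep A P x)^[h] ρ) s * MGrbar A R i x s|
      ≤ ∑ s, |((MGstep A P x)^[h] ρ) s * MGrbar A R i x s| := Finset.abs_sum_le_sum_abs _ _
    _ ≤ ∑ s, ((MGstep A P x)^[h] ρ) s := by
        refine Finset.sum_le_sum fun s _ => ?_
        rw [abs_mul, abs_of_nonneg (MG_iter_nonneg A P x hx hP ρ hρ h s)]
        calc ((MGstep A P x)^[h] ρ) s * |MGrbar A R i x s|
            ≤ ((MGstep A P x)^[h] ρ) s * 1 := mul_le_mul_of_nonneg_left
              (MG_rbar_bound A R i x hx hR s) (MG_iter_nonneg A P x hx hP ρ hρ h s)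
          _ = _ := mul_one _
    _ ≤ (1 - ζ) ^ h * ∑ s, ρ s := MG_iter_mass A P hζ1 hP hPmass x hx ρ hρ h
    _ = (∑ s, ρ s) * (1 - ζ) ^ h := mul_comm _ _

lemma MG_summable_val {ζ : ℝ} (hζ : 0 < ζ) (hζ1 : ζ ≤ 1)
    (hP : ∀ s a s', 0 ≤ P s a s') (hPmass : ∀ s a, ∑ s', P s a s' ≤ 1 - ζ)
    (hR : ∀ i s a, R i s a ∈ Set.Icc (-1 : ℝ) 1)
    (i : Fin n) (x : ∀ i, S → A i → ℝ) (hx : ∀ i s, x i s ∈ stdSimplex ℝ (A i))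
    (ρ : S → ℝ) (hρ : ∀ s, 0 ≤ ρ s) :
    Summable (fun h : ℕ => ∑ s, ((MGstep A P x)^[h] ρ) s * MGrbar A R i x s) :=
  MG_summable_bound (by linarith) (by linarith)
    (MG_term_bound A P R hζ1 hP hPmass hR i x hx ρ hρ)

lemma MG_delta_nonneg (s t : S) : 0 ≤ MGdelta s t := by
  unfold MGdelta; split <;> norm_num

lemma MG_delta_mass (s : S) : ∑ t, MGdelta s t = 1 := by
  simp [MGdelta, Finset.sum_ite_eq']

lemma MG_val_lin {ζ : ℝ} (hζ : 0 < ζ) (hζ1 : ζ ≤ 1)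
    (hP : ∀ s a s', 0 ≤ P s a s') (hPmass : ∀ s a, ∑ s', P s a s' ≤ 1 - ζ)
    (hR : ∀ i s a, R i s a ∈ Set.Icc (-1 : ℝ) 1)
    (i : Fin n) (x : ∀ i, S → A i → ℝ) (hx : ∀ i s, x i s ∈ stdSimplex ℝ (A i))
    (ρ : S → ℝ) (hρ : ∀ s, 0 ≤ ρ s) :
    MGval A P R i x ρ = ∑ s, ρ s * MGval A P R i x (MGdelta s) := by
  rw [MG_val_eq]
  have e1 : ∀ h : ℕ, ∑ t, ((MGstep A P x)^[h] ρ) t * MGrbar A R i x t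
      = ∑ s, ρ s * ∑ t, ((MGstep A P x)^[h] (MGdelta s)) t * MGrbar A R i x t := by
    intro h
    simp_rw [Finset.mul_sum]
    rw [Finset.sum_comm]
    refine Finset.sum_congr rfl fun t _ => ?_
    rw [MG_iter_lin, Finset.sum_mul]
    exact Finset.sum_congr rfl fun s _ => by ring
  simp_rw [e1]
  rw [Summable.tsum_finsetSum (fun s _ => ?_)]
  · exact Finset.sum_congr rfl fun s _ => by
      rw [MG_val_eq, ← tsum_mul_left]
  · exact Summable.mul_left _ (MG_summable_val A P R hζ hζ1 hP hPmass hR i x hx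
      (MGdelta s) (MG_delta_nonneg s))

end Aux2

set_option linter.unusedSectionVars false

section Aux3
variable {S : Type} [Fintype S] [DecidableEq S] {n : ℕ}
  (A : Fin n → Type) [∀ i, Fintype (A i)]
  (P : S → (∀ i, A i) → S → ℝ) (R : Fin n → S → (∀ i, A i) → ℝ)

lemma MG_step_delta (x : ∀ i, S → A i → ℝ) (s s' : S) :
    MGstep A P x (MGdelta s) s' = ∑ a : ∀ i, A i, MGjointProb A x s a * P s a s' := by
  unfold MGstep MGdelta
  simp [ite_mul, Finset.sum_ite_eq']

lemma MG_Q_eq (i : Fin n) (x : ∀ i, S → A i → ℝ) (s : S) (a : ∀ i, A i) :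
    MGQ A P R i x s a = R i s a + ∑ s', P s a s' * MGval A P R i x (MGdelta s') := rfl

lemma MG_Vdelta_bound {ζ : ℝ} (hζ : 0 < ζ) (hζ1 : ζ ≤ 1)
    (hP : ∀ s a s', 0 ≤ P s a s') (hPmass : ∀ s a, ∑ s', P s a s' ≤ 1 - ζ)
    (hR : ∀ i s a, R i s a ∈ Set.Icc (-1 : ℝ) 1)
    (i : Fin n) (x : ∀ i, S → A i → ℝ) (hx : ∀ i s, x i s ∈ stdSimplex ℝ (A i)) (s : S) :
    |MGval A P R i x (MGdelta s)| ≤ ζ⁻¹ := by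
  have h0 : (0:ℝ) ≤ 1 - ζ := by linarith
  have h1 : (1:ℝ) - ζ < 1 := by linarith
  have hgs : HasSum (fun h : ℕ => (1 - ζ) ^ h) ζ⁻¹ := by
    have := hasSum_geometric_of_lt_one h0 h1
    simpa using this
  have hb : ∀ h : ℕ, ‖∑ t, ((MGstep A P x)^[h] (MGdelta s)) t * MGrbar A R i x t‖
      ≤ (1 - ζ) ^ h := by
    intro h
    have := MG_term_bound A P R hζ1 hP hPmass hR i x hx (MGdelta s) (MG_delta_nonneg s) h
    rw [MG_delta_mass] at this
    simpa using this
  have := tsum_of_norm_bounded hgs hb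
  rw [MG_val_eq]
  simpa using this

lemma MG_Q_bound {ζ : ℝ} (hζ : 0 < ζ) (hζ1 : ζ ≤ 1)
    (hP : ∀ s a s', 0 ≤ P s a s') (hPmass : ∀ s a, ∑ s', P s a s' ≤ 1 - ζ)
    (hR : ∀ i s a, R i s a ∈ Set.Icc (-1 : ℝ) 1)
    (i : Fin n) (x : ∀ i, S → A i → ℝ) (hx : ∀ i s, x i s ∈ stdSimplex ℝ (A i))
    (s : S) (a : ∀ i, A i) :
    |MGQ A P R i x s a| ≤ 1 + ζ⁻¹ := by
  rw [MG_Q_eq]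
  calc |R i s a + ∑ s', P s a s' * MGval A P R i x (MGdelta s')|
      ≤ |R i s a| + |∑ s', P s a s' * MGval A P R i x (MGdelta s')| := abs_add_le _ _
    _ ≤ 1 + ζ⁻¹ := by
        have h1 : |R i s a| ≤ 1 := abs_le.2 ⟨(hR i s a).1, (hR i s a).2⟩
        have h2 : |∑ s', P s a s' * MGval A P R i x (MGdelta s')| ≤ ζ⁻¹ := by
          calc |∑ s', P s a s' * MGval A P R i x (MGdelta s')|
              ≤ ∑ s', |P s a s' * MGval A P R i x (MGdelta s')| := Finset.abs_sum_le_sum_abs _ _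
            _ ≤ ∑ s', P s a s' * ζ⁻¹ := by
                refine Finset.sum_le_sum fun s' _ => ?_
                rw [abs_mul, abs_of_nonneg (hP s a s')]
                exact mul_le_mul_of_nonneg_left
                  (MG_Vdelta_bound A P R hζ hζ1 hP hPmass hR i x hx s') (hP s a s')
            _ = (∑ s', P s a s') * ζ⁻¹ := (Finset.sum_mul _ _ _).symm
            _ ≤ 1 * ζ⁻¹ := by
                refine mul_le_mul_of_nonneg_right ?_ (by positivity)
                linarith [hPmass s a]
            _ = ζ⁻¹ := one_mul _
        linarith

/-- Bellman equation: `V(δ_s) = ∑_a π(a|s) Q(s,a)`. -/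
lemma MG_bellman {ζ : ℝ} (hζ : 0 < ζ) (hζ1 : ζ ≤ 1)
    (hP : ∀ s a s', 0 ≤ P s a s') (hPmass : ∀ s a, ∑ s', P s a s' ≤ 1 - ζ)
    (hR : ∀ i s a, R i s a ∈ Set.Icc (-1 : ℝ) 1)
    (i : Fin n) (x : ∀ i, S → A i → ℝ) (hx : ∀ i s, x i s ∈ stdSimplex ℝ (A i)) (s : S) :
    ∑ a : ∀ i, A i, MGjointProb A x s a * MGQ A P R i x s a
      = MGval A P R i x (MGdelta s) := by
  have hsumm := MG_summable_val A P R hζ hζ1 hP hPmass hR i x hx (MGdelta s) (MG_delta_nonneg s)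
  have step1 : MGval A P R i x (MGdelta s)
      = MGrbar A R i x s + MGval A P R i x (MGstep A P x (MGdelta s)) := by
    rw [MG_val_eq, Summable.tsum_eq_zero_add hsumm]
    have f0 : ∑ t, ((MGstep A P x)^[0] (MGdelta s)) t * MGrbar A R i x t
        = MGrbar A R i x s := by
      simp [MGdelta, ite_mul]
    have ftail : ∑' h : ℕ, ∑ t, ((MGstep A P x)^[h+1] (MGdelta s)) t * MGrbar A R i x t
        = MGval A P R i x (MGstep A P x (MGdelta s)) := by
      rw [MG_val_eq]
      exact tsum_congr fun h => by rw [Function.iterate_succ_apply]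
    rw [f0, ftail]
  have step2 : MGval A P R i x (MGstep A P x (MGdelta s))
      = ∑ s', MGstep A P x (MGdelta s) s' * MGval A P R i x (MGdelta s') :=
    MG_val_lin A P R hζ hζ1 hP hPmass hR i x hx _
      (MG_step_nonneg A P x hx hP _ (MG_delta_nonneg s))
  calc ∑ a : ∀ i, A i, MGjointProb A x s a * MGQ A P R i x s a
      = ∑ a : ∀ i, A i, (MGjointProb A x s a * R i s a
          + ∑ s', MGjointProb A x s a * P s a s' * MGval A P R i x (MGdelta s')) := by
        refine Finset.sum_congr rfl fun a _ => ?_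
        rw [MG_Q_eq, mul_add, Finset.mul_sum]
        congr 1
        exact Finset.sum_congr rfl fun s' _ => by ring
    _ = MGrbar A R i x s
          + ∑ s', (∑ a : ∀ i, A i, MGjointProb A x s a * P s a s')
              * MGval A P R i x (MGdelta s') := by
        rw [Finset.sum_add_distrib]
        congr 1
        rw [Finset.sum_comm]
        exact Finset.sum_congr rfl fun s' _ => (Finset.sum_mul _ _ _).symm
    _ = MGrbar A R i x s + ∑ s', MGstep A P x (MGdelta s) s' * MGval A P R i x (MGdelta s') := by
        simp_rw [MG_step_delta]
    _ = MGval A P R i x (MGdelta s) := by rw [step1, ← step2]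

end Aux3

set_option linter.unusedSectionVars false

section Aux4
variable {S : Type} [Fintype S] [DecidableEq S] {n : ℕ}
  (A : Fin n → Type) [∀ i, Fintype (A i)]
  (P : S → (∀ i, A i) → S → ℝ) (R : Fin n → S → (∀ i, A i) → ℝ)

lemma MG_perf_diff {ζ : ℝ} (hζ : 0 < ζ) (hζ1 : ζ ≤ 1)
    (hP : ∀ s a s', 0 ≤ P s a s') (hPmass : ∀ s a, ∑ s', P s a s' ≤ 1 - ζ)
    (hR : ∀ i s a, R i s a ∈ Set.Icc (-1 : ℝ) 1)
    (i : Fin n) (x y : ∀ i, S → A i → ℝ)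
    (hx : ∀ i s, x i s ∈ stdSimplex ℝ (A i)) (hy : ∀ i s, y i s ∈ stdSimplex ℝ (A i))
    (ρ : S → ℝ) (hρ0 : ∀ s, 0 ≤ ρ s) (hρ1 : ∑ s, ρ s = 1) :
    MGval A P R i y ρ - MGval A P R i x ρ
      = ∑ s, MGocc A P y ρ s *
          ∑ a : ∀ j, A j, (MGjointProb A y s a - MGjointProb A x s a) * MGQ A P R i x s a := by
  have h0 : (0:ℝ) ≤ 1 - ζ := by linarith
  have h1 : (1:ℝ) - ζ < 1 := by linarith
  set μ : ℕ → S → ℝ := fun h => (MGstep A P y)^[h] ρ with hμ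
  set V : S → ℝ := fun s => MGval A P R i x (MGdelta s) with hV
  set D : S → ℝ := fun s =>
    ∑ a : ∀ j, A j, (MGjointProb A y s a - MGjointProb A x s a) * MGQ A P R i x s a with hD
  set g : ℕ → ℝ := fun h => ∑ s, μ h s * V s with hg
  set aa : ℕ → ℝ := fun h => ∑ s, μ h s * MGrbar A R i y s with haa
  set cc : ℕ → ℝ := fun h => ∑ s, μ h s * D s with hcc
  have hμpos : ∀ h s, 0 ≤ μ h s := fun h s => MG_iter_nonneg A P y hy hP ρ hρ0 h s
  have hμmass : ∀ h, ∑ s, μ h s ≤ (1 - ζ) ^ h := fun h => by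
    have := MG_iter_mass A P hζ1 hP hPmass y hy ρ hρ0 h
    rwa [hρ1, mul_one] at this
  have hμpt : ∀ h s, μ h s ≤ (1 - ζ) ^ h := fun h t => by
    have := MG_iter_ptwise A P hζ1 hP hPmass y hy ρ hρ0 h t
    rwa [hρ1, mul_one] at this
  have hVb : ∀ s, |V s| ≤ ζ⁻¹ := fun s => MG_Vdelta_bound A P R hζ hζ1 hP hPmass hR i x hx s
  have hQb : ∀ s a, |MGQ A P R i x s a| ≤ 1 + ζ⁻¹ :=
    fun s a => MG_Q_bound A P R hζ hζ1 hP hPmass hR i x hx s a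
  have hDb : ∀ s, |D s| ≤ 2 * (1 + ζ⁻¹) := by
    intro s
    rw [hD]
    calc |∑ a : ∀ j, A j, (MGjointProb A y s a - MGjointProb A x s a) * MGQ A P R i x s a|
        ≤ ∑ a : ∀ j, A j, |(MGjointProb A y s a - MGjointProb A x s a) * MGQ A P R i x s a| :=
          Finset.abs_sum_le_sum_abs _ _
      _ ≤ ∑ a : ∀ j, A j,
            (MGjointProb A y s a + MGjointProb A x s a) * (1 + ζ⁻¹) := by
          refine Finset.sum_le_sum fun a _ => ?_
          rw [abs_mul]
          have e1 : |MGjointProb A y s a - MGjointProb A x s a|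
              ≤ MGjointProb A y s a + MGjointProb A x s a := by
            have := abs_sub (MGjointProb A y s a) (MGjointProb A x s a)
            rw [abs_of_nonneg (MG_jp_nonneg A y hy s a),
              abs_of_nonneg (MG_jp_nonneg A x hx s a)] at this
            exact this
          exact mul_le_mul e1 (hQb s a) (abs_nonneg _)
            (add_nonneg (MG_jp_nonneg A y hy s a) (MG_jp_nonneg A x hx s a))
      _ = 2 * (1 + ζ⁻¹) := by
          rw [← Finset.sum_mul, Finset.sum_add_distrib, MG_jp_sum A y hy s, MG_jp_sum A x hx s]
          ring
  -- summability
  have hsa : Summable aa := MG_summable_val A P R hζ hζ1 hP hPmass hR i y hy ρ hρ0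
  have hsc : Summable cc := by
    refine MG_summable_bound (C := 2 * (1 + ζ⁻¹)) h0 h1 fun h => ?_
    rw [hcc]
    calc |∑ s, μ h s * D s| ≤ ∑ s, |μ h s * D s| := Finset.abs_sum_le_sum_abs _ _
      _ ≤ ∑ s, μ h s * (2 * (1 + ζ⁻¹)) := by
          refine Finset.sum_le_sum fun s _ => ?_
          rw [abs_mul, abs_of_nonneg (hμpos h s)]
          exact mul_le_mul_of_nonneg_left (hDb s) (hμpos h s)
      _ = (∑ s, μ h s) * (2 * (1 + ζ⁻¹)) := (Finset.sum_mul _ _ _).symm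
      _ ≤ (1 - ζ) ^ h * (2 * (1 + ζ⁻¹)) := by
          refine mul_le_mul_of_nonneg_right (hμmass h) (by positivity)
      _ = 2 * (1 + ζ⁻¹) * (1 - ζ) ^ h := by ring
  -- Bellman for x and the Q-expansion
  have hbell : ∀ s, ∑ a : ∀ j, A j, MGjointProb A x s a * MGQ A P R i x s a = V s :=
    fun s => MG_bellman A P R hζ hζ1 hP hPmass hR i x hx s
  have hQdef : ∀ s (a : ∀ j, A j), MGQ A P R i x s a = R i s a + ∑ s', P s a s' * V s' :=
    fun s a => rfl
  -- next-step expansion of g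
  have hg_succ : ∀ h, g (h+1)
      = ∑ s, ∑ a : ∀ j, A j, μ h s * (MGjointProb A y s a * ∑ s', P s a s' * V s') := by
    intro h
    have e1 : g (h+1) = ∑ s', MGstep A P y (μ h) s' * V s' := by
      rw [hg]
      exact Finset.sum_congr rfl fun s' _ => by
        rw [hμ]; simp only [Function.iterate_succ_apply']
    rw [e1]
    show ∑ s', (∑ s, ∑ a : ∀ j, A j, μ h s * MGjointProb A y s a * P s a s') * V s' = _
    simp_rw [Finset.sum_mul]
    rw [Finset.sum_comm]
    refine Finset.sum_congr rfl fun s _ => ?_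
    rw [Finset.sum_comm]
    refine Finset.sum_congr rfl fun a _ => ?_
    simp_rw [Finset.mul_sum]
    exact Finset.sum_congr rfl fun s' _ => by ring
  -- the key pointwise identity
  have hkey : ∀ h, cc h = aa h - (g h - g (h+1)) := by
    intro h
    have per : ∀ s, μ h s * D s
        = μ h s * MGrbar A R i y s
          + (∑ a : ∀ j, A j, μ h s * (MGjointProb A y s a * ∑ s', P s a s' * V s'))
          - μ h s * V s := by
      intro s
      have e1 : D s = (∑ a : ∀ j, A j, MGjointProb A y s a * MGQ A P R i x s a) - V s := by
        rw [hD, ← hbell s, ← Finset.sum_sub_distrib]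
        exact Finset.sum_congr rfl fun a _ => by ring
      have e2 : ∑ a : ∀ j, A j, MGjointProb A y s a * MGQ A P R i x s a
          = MGrbar A R i y s
            + ∑ a : ∀ j, A j, MGjointProb A y s a * ∑ s', P s a s' * V s' := by
        rw [MGrbar, ← Finset.sum_add_distrib]
        refine Finset.sum_congr rfl fun a _ => ?_
        rw [hQdef s a]; ring
      have e3 : μ h s * ∑ a : ∀ j, A j, MGjointProb A y s a * ∑ s', P s a s' * V s'
          = ∑ a : ∀ j, A j, μ h s * (MGjointProb A y s a * ∑ s', P s a s' * V s') :=
        Finset.mul_sum _ _ _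
      rw [e1, e2, ← e3]
      ring
    rw [hcc, haa, hg_succ h]
    calc ∑ s, μ h s * D s
        = ∑ s, (μ h s * MGrbar A R i y s
            + (∑ a : ∀ j, A j, μ h s * (MGjointProb A y s a * ∑ s', P s a s' * V s'))
            - μ h s * V s) := Finset.sum_congr rfl fun s _ => per s
      _ = (∑ s, μ h s * MGrbar A R i y s)
            + (∑ s, ∑ a : ∀ j, A j, μ h s * (MGjointProb A y s a * ∑ s', P s a s' * V s'))
            - ∑ s, μ h s * V s := by
          rw [Finset.sum_sub_distrib, Finset.sum_add_distrib]
      _ = _ := by rw [hg]; ring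
  -- telescoping
  have hsb : Summable (fun h => g h - g (h+1)) := by
    have : (fun h => g h - g (h+1)) = fun h => aa h - cc h := by
      funext h; have := hkey h; linarith
    rw [this]
    exact hsa.sub hsc
  have hgb : ∀ h, |g h| ≤ ζ⁻¹ * (1 - ζ) ^ h := by
    intro h
    rw [hg]
    calc |∑ s, μ h s * V s| ≤ ∑ s, |μ h s * V s| := Finset.abs_sum_le_sum_abs _ _
      _ ≤ ∑ s, μ h s * ζ⁻¹ := by
          refine Finset.sum_le_sum fun s _ => ?_
          rw [abs_mul, abs_of_nonneg (hμpos h s)]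
          exact mul_le_mul_of_nonneg_left (hVb s) (hμpos h s)
      _ = (∑ s, μ h s) * ζ⁻¹ := (Finset.sum_mul _ _ _).symm
      _ ≤ (1 - ζ) ^ h * ζ⁻¹ := mul_le_mul_of_nonneg_right (hμmass h) (by positivity)
      _ = ζ⁻¹ * (1 - ζ) ^ h := mul_comm _ _
  have hgt : Filter.Tendsto g Filter.atTop (nhds 0) := by
    apply squeeze_zero_norm hgb
    have := (tendsto_pow_atTop_nhds_zero_of_lt_one h0 h1).const_mul ζ⁻¹
    simpa using this
  have htel : ∑' h : ℕ, (g h - g (h+1)) = g 0 := by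
    have h2 := hsb.hasSum.tendsto_sum_nat
    have h3 : Filter.Tendsto (fun N => ∑ h ∈ Finset.range N, (g h - g (h+1)))
        Filter.atTop (nhds (g 0)) := by
      have e : (fun N => ∑ h ∈ Finset.range N, (g h - g (h+1))) = fun N => g 0 - g N := by
        funext N; exact Finset.sum_range_sub' g N
      rw [e]
      have := (tendsto_const_nhds (x := g 0) (f := Filter.atTop (α := ℕ))).sub hgt
      simpa using this
    exact tendsto_nhds_unique h2 h3
  -- put everything together
  have hvy : MGval A P R i y ρ = ∑' h : ℕ, aa h := by rw [MG_val_eq]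
  have hvx : MGval A P R i x ρ = g 0 := by
    rw [MG_val_lin A P R hζ hζ1 hP hPmass hR i x hx ρ hρ0, hg]
    rfl
  have hdiff : MGval A P R i y ρ - MGval A P R i x ρ = ∑' h : ℕ, cc h := by
    rw [hvy, hvx, ← htel, ← Summable.tsum_sub hsa hsb]
    exact (tsum_congr fun h => by have := hkey h; linarith).symm
  rw [hdiff]
  -- swap the sums
  have hsws : ∀ s, Summable (fun h => μ h s * D s) := by
    intro s
    refine MG_summable_bound (C := |D s|) h0 h1 fun h => ?_
    rw [abs_mul, abs_of_nonneg (hμpos h s)]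
    calc μ h s * |D s| ≤ (1 - ζ) ^ h * |D s| :=
          mul_le_mul_of_nonneg_right (hμpt h s) (abs_nonneg _)
      _ = |D s| * (1 - ζ) ^ h := mul_comm _ _
  calc ∑' h : ℕ, cc h = ∑' h : ℕ, ∑ s, μ h s * D s := tsum_congr fun h => by rw [hcc]
    _ = ∑ s, ∑' h : ℕ, μ h s * D s := Summable.tsum_finsetSum fun s _ => hsws s
    _ = ∑ s, (∑' h : ℕ, μ h s) * D s := Finset.sum_congr rfl fun s _ => tsum_mul_right
    _ = ∑ s, MGocc A P y ρ s * D s := rfl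

end Aux4


/-- Value difference (performance difference) lemma:
`V_i^{π_i', π_{−i}}(ρ) − V_i^{π}(ρ)
  = Σ_s d̃_ρ^{π_i', π_{−i}}[s] Σ_{a_i} (x'_{i,s}[a_i] − x_{i,s}[a_i]) ·
      E_{a_{−i} ~ π_{−i}(·|s)}[Q_i^π(s, a_i, a_{−i})]`. -/
theorem value_difference_lemma {S : Type} [Fintype S] [DecidableEq S] {n : ℕ}
    (A : Fin n → Type) [∀ i, Fintype (A i)] [∀ i, DecidableEq (A i)]
    (P : S → (∀ i, A i) → S → ℝ) (R : Fin n → S → (∀ i, A i) → ℝ)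
    (ζ : ℝ) (hζ : 0 < ζ) (hζ1 : ζ ≤ 1)
    (hPpos : ∀ s a s', 0 ≤ P s a s')
    (hPmass : ∀ s a, ∑ s', P s a s' ≤ 1 - ζ)
    (hR : ∀ i s a, R i s a ∈ Set.Icc (-1 : ℝ) 1)
    (x : ∀ i, S → A i → ℝ) (hx : ∀ i s, x i s ∈ stdSimplex ℝ (A i))
    (ρ : S → ℝ) (hρ : ρ ∈ stdSimplex ℝ S)
    (i : Fin n) (x' : S → A i → ℝ) (hx' : ∀ s, x' s ∈ stdSimplex ℝ (A i)) :
    MGval A P R i (Function.update x i x') ρ - MGval A P R i x ρ =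
      ∑ s, MGocc A P (Function.update x i x') ρ s *
        ∑ ai : A i, (x' s ai - x i s ai) *
          ∑ a ∈ Finset.univ.filter (fun a : ∀ j, A j => a i = ai),
            (∏ j ∈ Finset.univ.erase i, x j s (a j)) * MGQ A P R i x s a := by
  classical
  set y : ∀ j, S → A j → ℝ := Function.update x i x' with hy_def
  have hy : ∀ j s, y j s ∈ stdSimplex ℝ (A j) := by
    intro j s
    by_cases hj : j = i
    · subst hj; rw [hy_def, Function.update_self]; exact hx' s
    · rw [hy_def, Function.update_of_ne hj]; exact hx j s
  have hmain := MG_perf_diff A P R hζ hζ1 hPpos hPmass hR i x y hx hy ρ hρ.1 hρ.2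
  rw [hmain]
  refine Finset.sum_congr rfl fun s _ => ?_
  congr 1
  -- decompose the joint-probability difference
  have hprod : ∀ a : ∀ j, A j,
      MGjointProb A y s a - MGjointProb A x s a
        = (x' s (a i) - x i s (a i)) * ∏ j ∈ Finset.univ.erase i, x j s (a j) := by
    intro a
    unfold MGjointProb
    rw [← Finset.mul_prod_erase Finset.univ (fun j => y j s (a j)) (Finset.mem_univ i),
      ← Finset.mul_prod_erase Finset.univ (fun j => x j s (a j)) (Finset.mem_univ i)]
    have e : ∏ j ∈ Finset.univ.erase i, y j s (a j)
        = ∏ j ∈ Finset.univ.erase i, x j s (a j) :=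
      Finset.prod_congr rfl fun j hj => by
        rw [hy_def, Function.update_of_ne (Finset.ne_of_mem_erase hj)]
    rw [e, hy_def, Function.update_self]
    ring
  calc ∑ a : ∀ j, A j, (MGjointProb A y s a - MGjointProb A x s a) * MGQ A P R i x s a
      = ∑ a : ∀ j, A j, (x' s (a i) - x i s (a i))
          * ((∏ j ∈ Finset.univ.erase i, x j s (a j)) * MGQ A P R i x s a) := by
        refine Finset.sum_congr rfl fun a _ => ?_
        rw [hprod a]; ring
    _ = ∑ ai : A i, ∑ a ∈ Finset.univ.filter (fun a : ∀ j, A j => a i = ai),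
          (x' s (a i) - x i s (a i))
            * ((∏ j ∈ Finset.univ.erase i, x j s (a j)) * MGQ A P R i x s a) :=
        (Finset.sum_fiberwise Finset.univ (fun a : ∀ j, A j => a i) _).symm
    _ = ∑ ai : A i, (x' s ai - x i s ai) *
          ∑ a ∈ Finset.univ.filter (fun a : ∀ j, A j => a i = ai),
            (∏ j ∈ Finset.univ.erase i, x j s (a j)) * MGQ A P R i x s a := by
        refine Finset.sum_congr rfl fun ai _ => ?_
        rw [Finset.mul_sum]
        refine Finset.sum_congr rfl fun a ha => ?_
        rw [(Finset.mem_filter.1 ha).2]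
end

section
/- Lipschitz continuity of the visitation measure in policies: for any two joint policies π, π' with direct parameterizations x, x', and any state s, | d̃_ρ^π[s] − d̃_ρ^{π'}[s] | ≤ (1/ζ²) ‖x − x'‖₁. -/
open Finset

/-!
Let `T_x` be the sub-stochastic transition operator of the joint policy `x`, so that the
occupancy measure is `d = Σ_h T_x^h ρ`. It satisfies the flow equation `d = ρ + T_x d`, and
`T_x` contracts the `ℓ¹` norm by the factor `1 - ζ`, whence `‖d‖₁ ≤ ‖ρ‖₁ / ζ`. Subtracting the
flow equations of `x` and `x'` gives `d - d' = T_x (d - d') + (T_x - T_x') d'`, and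
`‖(T_x - T_x') μ‖₁ ≤ ‖x - x'‖₁ ‖μ‖₁` because the `ℓ¹` distance of two product distributions is
at most the sum of the distances of their factors (telescoping over the players). Hence
`ζ ‖d - d'‖₁ ≤ ‖x - x'‖₁ / ζ`.
-/

lemma sum_abs_prod_sub_prod_le : ∀ {n : ℕ} (A : Fin n → Type) [∀ i, Fintype (A i)]
    (p q : ∀ i, A i → ℝ), (∀ i a, 0 ≤ p i a) → (∀ i a, 0 ≤ q i a) →
    (∀ i, ∑ a, p i a = 1) → (∀ i, ∑ a, q i a = 1) →
    ∑ a : ∀ i, A i, |∏ i, p i (a i) - ∏ i, q i (a i)| ≤ ∑ i, ∑ b, |p i b - q i b|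
  | 0, _, _, _, _, _, _, _, _ => by simp
  | m + 1, A, _, p, q, hp, hq, hp₁, hq₁ => by
    set p' : ∀ i : Fin m, A i.succ → ℝ := fun i => p i.succ
    set q' : ∀ i : Fin m, A i.succ → ℝ := fun i => q i.succ
    have ih := sum_abs_prod_sub_prod_le (fun i : Fin m => A i.succ) p' q'
      (fun i => hp i.succ) (fun i => hq i.succ) (fun i => hp₁ i.succ) (fun i => hq₁ i.succ)
    have hq'₁ : ∑ c : ∀ i : Fin m, A i.succ, ∏ i, q' i (c i) = 1 := by
      simp [← Fintype.prod_sum, q', hq₁]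
    have split : ∑ a : ∀ i, A i, |∏ i, p i (a i) - ∏ i, q i (a i)| =
        ∑ b : A 0, ∑ c : ∀ i : Fin m, A i.succ,
          |p 0 b * ∏ i, p' i (c i) - q 0 b * ∏ i, q' i (c i)| := by
      rw [← (Fin.consEquiv A).sum_comp, Fintype.sum_prod_type]
      simp [Fin.consEquiv, Fin.prod_univ_succ, p', q']
    -- `p₀ P - q₀ Q = p₀ (P - Q) + (p₀ - q₀) Q`
    calc ∑ a : ∀ i, A i, |∏ i, p i (a i) - ∏ i, q i (a i)|
        ≤ ∑ b : A 0, ∑ c : ∀ i : Fin m, A i.succ,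
            (p 0 b * |∏ i, p' i (c i) - ∏ i, q' i (c i)| + |p 0 b - q 0 b| * ∏ i, q' i (c i)) := by
          rw [split]
          gcongr with b _ c _
          have hQ : 0 ≤ ∏ i, q' i (c i) := prod_nonneg fun i _ => hq i.succ (c i)
          calc |p 0 b * ∏ i, p' i (c i) - q 0 b * ∏ i, q' i (c i)|
              = |p 0 b * (∏ i, p' i (c i) - ∏ i, q' i (c i)) + (p 0 b - q 0 b) * ∏ i, q' i (c i)| := by
                ring_nf
            _ ≤ _ := by
                refine (abs_add_le _ _).trans_eq ?_
                rw [abs_mul, abs_mul, abs_of_nonneg (hp 0 b), abs_of_nonneg hQ]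
      _ = ∑ c : ∀ i : Fin m, A i.succ, |∏ i, p' i (c i) - ∏ i, q' i (c i)| +
            ∑ b : A 0, |p 0 b - q 0 b| := by
          simp only [sum_add_distrib, ← mul_sum, ← sum_mul, hp₁, hq'₁, one_mul, mul_one]
      _ ≤ ∑ i, ∑ b, |p i b - q i b| := by
          rw [Fin.sum_univ_succ, add_comm (∑ b, _)]
          gcongr

section MarkovGame

variable {S : Type} {n : ℕ} {A : Fin n → Type} [∀ i, Fintype (A i)]

lemma MGjointProb_nonneg {x : ∀ i, S → A i → ℝ} (hx : ∀ i s, x i s ∈ stdSimplex ℝ (A i))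
    (s : S) (a : ∀ i, A i) : 0 ≤ MGjointProb A x s a :=
  prod_nonneg fun i _ => (hx i s).1 (a i)

lemma sum_MGjointProb {x : ∀ i, S → A i → ℝ} (hx : ∀ i s, x i s ∈ stdSimplex ℝ (A i))
    (s : S) : ∑ a, MGjointProb A x s a = 1 := by
  simp [MGjointProb, ← Fintype.prod_sum, fun i => (hx i s).2]

lemma sum_abs_MGjointProb_sub_le [Fintype S] {x x' : ∀ i, S → A i → ℝ}
    (hx : ∀ i s, x i s ∈ stdSimplex ℝ (A i)) (hx' : ∀ i s, x' i s ∈ stdSimplex ℝ (A i))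
    (s : S) :
    ∑ a, |MGjointProb A x s a - MGjointProb A x' s a| ≤
      ∑ i, ∑ t, ∑ b, |x i t b - x' i t b| :=
  calc ∑ a, |MGjointProb A x s a - MGjointProb A x' s a|
      ≤ ∑ i, ∑ b, |x i s b - x' i s b| :=
        sum_abs_prod_sub_prod_le A (fun i => x i s) (fun i => x' i s)
          (fun i => (hx i s).1) (fun i => (hx' i s).1) (fun i => (hx i s).2) (fun i => (hx' i s).2)
    _ ≤ ∑ i, ∑ t, ∑ b, |x i t b - x' i t b| := by
        gcongr with i _
        exact single_le_sum (f := fun t => ∑ b, |x i t b - x' i t b|)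
          (fun _ _ => sum_nonneg fun _ _ => abs_nonneg _) (mem_univ s)

variable [Fintype S] {P : S → (∀ i, A i) → S → ℝ}

lemma sum_abs_kernel_apply_le {c : ℝ} (hP : ∀ s a s', 0 ≤ P s a s')
    (hPc : ∀ s a, ∑ s', P s a s' ≤ c) (μ : S → ℝ) (w : S → (∀ i, A i) → ℝ) :
    ∑ s', |∑ s, ∑ a, μ s * w s a * P s a s'| ≤ c * ∑ s, |μ s| * ∑ a, |w s a| :=
  calc ∑ s', |∑ s, ∑ a, μ s * w s a * P s a s'|
      ≤ ∑ s', ∑ s, ∑ a, |μ s| * |w s a| * P s a s' := by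
        gcongr with s' _
        refine (abs_sum_le_sum_abs _ _).trans (sum_le_sum fun s _ => ?_)
        refine (abs_sum_le_sum_abs _ _).trans_eq (sum_congr rfl fun a _ => ?_)
        rw [abs_mul, abs_mul, abs_of_nonneg (hP s a s')]
    _ = ∑ s, ∑ a, |μ s| * |w s a| * ∑ s', P s a s' := by
        rw [sum_comm]
        simp_rw [mul_sum]
        exact sum_congr rfl fun s _ => sum_comm
    _ ≤ ∑ s, ∑ a, |μ s| * |w s a| * c := by
        gcongr with s _ a _
        exact hPc s a
    _ = c * ∑ s, |μ s| * ∑ a, |w s a| := by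
        rw [mul_sum]
        exact sum_congr rfl fun s _ => by rw [← sum_mul, ← mul_sum, mul_comm]

lemma sum_abs_MGstep_le {r : ℝ} (hP : ∀ s a s', 0 ≤ P s a s')
    (hPr : ∀ s a, ∑ s', P s a s' ≤ r) {x : ∀ i, S → A i → ℝ} (hx : ∀ i s, x i s ∈ stdSimplex ℝ (A i))
    (μ : S → ℝ) : ∑ s, |MGstep A P x μ s| ≤ r * ∑ s, |μ s| := by
  have hw : ∀ s, ∑ a, |MGjointProb A x s a| = 1 := fun s => by
    rw [← sum_MGjointProb hx s]
    exact sum_congr rfl fun a _ => abs_of_nonneg (MGjointProb_nonneg hx s a)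
  refine (sum_abs_kernel_apply_le hP hPr μ _).trans_eq ?_
  simp only [hw, mul_one]

lemma sum_abs_MGstep_sub_MGstep_le (hP : ∀ s a s', 0 ≤ P s a s')
    (hP₁ : ∀ s a, ∑ s', P s a s' ≤ 1) {x x' : ∀ i, S → A i → ℝ}
    (hx : ∀ i s, x i s ∈ stdSimplex ℝ (A i)) (hx' : ∀ i s, x' i s ∈ stdSimplex ℝ (A i))
    (μ : S → ℝ) :
    ∑ s, |MGstep A P x μ s - MGstep A P x' μ s| ≤
      (∑ i, ∑ t, ∑ b, |x i t b - x' i t b|) * ∑ s, |μ s| := by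
  have hdiff : ∀ s', MGstep A P x μ s' - MGstep A P x' μ s' =
      ∑ s, ∑ a, μ s * (MGjointProb A x s a - MGjointProb A x' s a) * P s a s' := by
    intro s'
    simp only [MGstep, ← sum_sub_distrib, mul_sub, sub_mul]
  simp only [hdiff]
  refine (sum_abs_kernel_apply_le hP hP₁ μ _).trans ?_
  rw [one_mul, mul_sum]
  refine sum_le_sum fun s _ => ?_
  exact (mul_le_mul_of_nonneg_left (sum_abs_MGjointProb_sub_le hx hx' s) (abs_nonneg _)).trans_eq
    (mul_comm _ _)

lemma MGstep_sub (x : ∀ i, S → A i → ℝ) (μ ν : S → ℝ) (s : S) :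
    MGstep A P x (μ - ν) s = MGstep A P x μ s - MGstep A P x ν s := by
  simp only [MGstep, Pi.sub_apply, sub_mul, sum_sub_distrib]

lemma MGstep_tsum (x : ∀ i, S → A i → ℝ) {f : ℕ → S → ℝ}
    (hf : ∀ s, Summable fun h => f h s) (s' : S) :
    MGstep A P x (fun s => ∑' h, f h s) s' = ∑' h, MGstep A P x (f h) s' :=
  (hasSum_sum fun s _ => hasSum_sum fun _ _ =>
    ((hf s).hasSum.mul_right _).mul_right _).tsum_eq.symm

lemma sum_abs_MGstep_iterate_le {r : ℝ} (hr : 0 ≤ r) (hP : ∀ s a s', 0 ≤ P s a s')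
    (hPr : ∀ s a, ∑ s', P s a s' ≤ r) {x : ∀ i, S → A i → ℝ}
    (hx : ∀ i s, x i s ∈ stdSimplex ℝ (A i)) (μ : S → ℝ) (h : ℕ) :
    ∑ s, |(MGstep A P x)^[h] μ s| ≤ r ^ h * ∑ s, |μ s| := by
  induction h with
  | zero => simp
  | succ h ih =>
    rw [Function.iterate_succ_apply', pow_succ', mul_assoc]
    exact (sum_abs_MGstep_le hP hPr hx _).trans (mul_le_mul_of_nonneg_left ih hr)

variable {ζ : ℝ}

lemma summable_MGstep_iterate (hζ : 0 < ζ) (hζ1 : ζ ≤ 1) (hP : ∀ s a s', 0 ≤ P s a s')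
    (hPζ : ∀ s a, ∑ s', P s a s' ≤ 1 - ζ) {x : ∀ i, S → A i → ℝ}
    (hx : ∀ i s, x i s ∈ stdSimplex ℝ (A i)) (μ : S → ℝ) (s : S) :
    Summable fun h => (MGstep A P x)^[h] μ s := by
  refine Summable.of_norm_bounded
    ((summable_geometric_of_lt_one (sub_nonneg.2 hζ1) (by linarith)).mul_right (∑ t, |μ t|))
    fun h => ?_
  exact (single_le_sum (f := fun t => |(MGstep A P x)^[h] μ t|) (fun _ _ => abs_nonneg _)
    (mem_univ s)).trans (sum_abs_MGstep_iterate_le (sub_nonneg.2 hζ1) hP hPζ hx μ h)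

lemma MGocc_eq_add_MGstep (hζ : 0 < ζ) (hζ1 : ζ ≤ 1) (hP : ∀ s a s', 0 ≤ P s a s')
    (hPζ : ∀ s a, ∑ s', P s a s' ≤ 1 - ζ) {x : ∀ i, S → A i → ℝ}
    (hx : ∀ i s, x i s ∈ stdSimplex ℝ (A i)) (μ : S → ℝ) (s : S) :
    MGocc A P x μ s = μ s + MGstep A P x (MGocc A P x μ) s := by
  have hsum := summable_MGstep_iterate hζ hζ1 hP hPζ hx μ
  unfold MGocc
  rw [(hsum s).tsum_eq_zero_add, MGstep_tsum x hsum]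
  simp only [Function.iterate_zero_apply, Function.iterate_succ_apply']

lemma sum_abs_MGocc_le (hζ : 0 < ζ) (hζ1 : ζ ≤ 1) (hP : ∀ s a s', 0 ≤ P s a s')
    (hPζ : ∀ s a, ∑ s', P s a s' ≤ 1 - ζ) {x : ∀ i, S → A i → ℝ}
    (hx : ∀ i s, x i s ∈ stdSimplex ℝ (A i)) (μ : S → ℝ) :
    ∑ s, |MGocc A P x μ s| ≤ ζ⁻¹ * ∑ s, |μ s| := by
  set d := MGocc A P x μ
  have flow : ∑ s, |d s| ≤ ∑ s, |μ s| + (1 - ζ) * ∑ s, |d s| :=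
    calc ∑ s, |d s| = ∑ s, |μ s + MGstep A P x d s| := by
          simp only [d, ← MGocc_eq_add_MGstep hζ hζ1 hP hPζ hx μ]
      _ ≤ ∑ s, |μ s| + ∑ s, |MGstep A P x d s| := by
          rw [← sum_add_distrib]
          exact sum_le_sum fun s _ => abs_add_le _ _
      _ ≤ ∑ s, |μ s| + (1 - ζ) * ∑ s, |d s| := by
          gcongr
          exact sum_abs_MGstep_le hP hPζ hx d
  rw [le_inv_mul_iff₀ hζ]
  linarith

lemma sum_abs_MGocc_sub_MGocc_le (hζ : 0 < ζ) (hζ1 : ζ ≤ 1) (hP : ∀ s a s', 0 ≤ P s a s')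
    (hPζ : ∀ s a, ∑ s', P s a s' ≤ 1 - ζ) {x x' : ∀ i, S → A i → ℝ}
    (hx : ∀ i s, x i s ∈ stdSimplex ℝ (A i)) (hx' : ∀ i s, x' i s ∈ stdSimplex ℝ (A i))
    (μ : S → ℝ) :
    ∑ s, |MGocc A P x μ s - MGocc A P x' μ s| ≤
      (1 / ζ ^ 2) * (∑ i, ∑ t, ∑ b, |x i t b - x' i t b|) * ∑ s, |μ s| := by
  set d := MGocc A P x μ
  set d' := MGocc A P x' μ
  set D := ∑ i, ∑ t, ∑ b, |x i t b - x' i t b|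
  have hP₁ : ∀ s a, ∑ s', P s a s' ≤ 1 := fun s a => (hPζ s a).trans (by linarith)
  -- value difference: `d - d' = T_x (d - d') + (T_x - T_x') d'`
  have split : ∀ s, d s - d' s = MGstep A P x (d - d') s +
      (MGstep A P x d' s - MGstep A P x' d' s) := fun s => by
    have hd := MGocc_eq_add_MGstep hζ hζ1 hP hPζ hx μ s
    have hd' := MGocc_eq_add_MGstep hζ hζ1 hP hPζ hx' μ s
    rw [MGstep_sub]
    linarith
  have contraction : ∑ s, |d s - d' s| ≤ (1 - ζ) * ∑ s, |d s - d' s| + D * (ζ⁻¹ * ∑ s, |μ s|) :=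
    calc ∑ s, |d s - d' s|
        ≤ ∑ s, |MGstep A P x (d - d') s| + ∑ s, |MGstep A P x d' s - MGstep A P x' d' s| := by
          simp only [split, ← sum_add_distrib]
          exact sum_le_sum fun s _ => abs_add_le _ _
      _ ≤ (1 - ζ) * ∑ s, |d s - d' s| + D * (ζ⁻¹ * ∑ s, |μ s|) := by
          gcongr
          · exact sum_abs_MGstep_le hP hPζ hx (d - d')
          · refine (sum_abs_MGstep_sub_MGstep_le hP hP₁ hx hx' d').trans ?_
            gcongr
            exact sum_abs_MGocc_le hζ hζ1 hP hPζ hx' μ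
  have hD : 0 ≤ D := by positivity
  rw [show 1 / ζ ^ 2 * D * ∑ s, |μ s| = ζ⁻¹ * (D * (ζ⁻¹ * ∑ s, |μ s|)) by ring,
    le_inv_mul_iff₀ hζ]
  linarith

end MarkovGame

theorem occupancy_lipschitz_in_policy_general {S : Type} [Fintype S] {n : ℕ}
    (A : Fin n → Type) [∀ i, Fintype (A i)]
    (P : S → (∀ i, A i) → S → ℝ) (ζ : ℝ) (hζ : 0 < ζ) (hζ1 : ζ ≤ 1)
    (hPpos : ∀ s a s', 0 ≤ P s a s')
    (hPmass : ∀ s a, ∑ s', P s a s' ≤ 1 - ζ)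
    (x x' : ∀ i, S → A i → ℝ)
    (hx : ∀ i s, x i s ∈ stdSimplex ℝ (A i)) (hx' : ∀ i s, x' i s ∈ stdSimplex ℝ (A i))
    (ρ : S → ℝ) (hρ : ρ ∈ stdSimplex ℝ S) (s : S) :
    |MGocc A P x ρ s - MGocc A P x' ρ s| ≤
      (1 / ζ ^ 2) * ∑ i, ∑ s', ∑ ai : A i, |x i s' ai - x' i s' ai| := by
  have hρ₁ : ∑ t, |ρ t| = 1 := by
    rw [← hρ.2]
    exact sum_congr rfl fun t _ => abs_of_nonneg (hρ.1 t)
  calc |MGocc A P x ρ s - MGocc A P x' ρ s|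
      ≤ ∑ t, |MGocc A P x ρ t - MGocc A P x' ρ t| :=
        single_le_sum (f := fun t => |MGocc A P x ρ t - MGocc A P x' ρ t|)
          (fun _ _ => abs_nonneg _) (mem_univ s)
    _ ≤ (1 / ζ ^ 2) * ∑ i, ∑ s', ∑ ai : A i, |x i s' ai - x' i s' ai| := by
        simpa [hρ₁] using sum_abs_MGocc_sub_MGocc_le hζ hζ1 hPpos hPmass hx hx' ρ

/-- Lipschitz continuity of the visitation measure in the policy: for any two joint
policies `π, π'` with direct parameterizations `x, x'` and any state `s`,
`|d̃_ρ^π[s] − d̃_ρ^{π'}[s]| ≤ (1/ζ²) ‖x − x'‖₁`. -/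
theorem occupancy_lipschitz_in_policy {S : Type} [Fintype S] [DecidableEq S] {n : ℕ}
    (A : Fin n → Type) [∀ i, Fintype (A i)]
    (P : S → (∀ i, A i) → S → ℝ) (ζ : ℝ) (hζ : 0 < ζ) (hζ1 : ζ ≤ 1)
    (hPpos : ∀ s a s', 0 ≤ P s a s')
    (hPmass : ∀ s a, ∑ s', P s a s' ≤ 1 - ζ)
    (x x' : ∀ i, S → A i → ℝ)
    (hx : ∀ i s, x i s ∈ stdSimplex ℝ (A i)) (hx' : ∀ i s, x' i s ∈ stdSimplex ℝ (A i))
    (ρ : S → ℝ) (hρ : ρ ∈ stdSimplex ℝ S) (s : S) :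
    |MGocc A P x ρ s - MGocc A P x' ρ s| ≤
      (1 / ζ ^ 2) * ∑ i, ∑ s', ∑ ai : A i, |x i s' ai - x' i s' ai| :=
  occupancy_lipschitz_in_policy_general A P ζ hζ hζ1 hPpos hPmass x x' hx hx' ρ hρ s
end

section
/- Path length under slackness γ: if the average generalized Minty property holds with slackness γ ≥ 0, i.e., for any sequence there is x* with (1/T)Σ_t ⟨x⁽ᵗ⁾ − x*, F(x⁽ᵗ⁾)∘A(x⁽ᵗ⁾)∘W(x*)⟩ ≥ −γ, then under the step-size condition η ≤ (1/4)√(ℓ/(h³L² + h B_F² α² d)), the iterates of the modified optimistic gradient descent satisfy Σ_{t=1}^T (‖x⁽ᵗ⁾ − x̂⁽ᵗ⁾‖₂² + ‖x⁽ᵗ⁾ − x̂⁽ᵗ⁺¹⁾‖₂²) ≤ 2 D_X² h/ℓ + (4ηγ/ℓ)·T, so some iterate t has ‖x⁽ᵗ⁾ − x̂⁽ᵗ⁾‖₂, ‖x⁽ᵗ⁾ − x̂⁽ᵗ⁺¹⁾‖₂ ≤ √(4ηγ/ℓ + 2D_X² h/(ℓT)). -/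
/-!
Measure distances in the norm weighted by `w(x*)`, where `x*` is the Minty point of the iterates
`x 1, …, x T`. The weights are constant on blocks and `X` is a product of blocks, so the Euclidean
projection onto `X` still satisfies the variational inequality of the weighted geometry, and the
usual optimistic-gradient step inequality holds there (all norms weighted):
`‖x̂ₜ₊₁ - x*‖² ≤ ‖x̂ₜ - x*‖² - ‖xₜ - x̂ₜ‖² - ‖xₜ - x̂ₜ₊₁‖² + 2η²‖uₜ - uₜ₋₁‖² - 2η⟪uₜ, xₜ - x*⟫`.
The map `x ↦ A(x) ∘ F(x)` is Lipschitz with squared constant `2(h²L² + dα²B_F²)`, so the step-size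
condition bounds `2η²‖uₜ - uₜ₋₁‖²` by `ℓ/2 (‖xₜ - x̂ₜ‖² + ‖xₜ₋₁ - x̂ₜ‖²)`: half of the path terms
that rounds `t` and `t - 1` subtract (weights are at least `ℓ`). Summing, the potential
`‖x̂ₜ - x*‖²` telescopes from at most `h D²`, and the Minty property bounds
`-Σ ⟪uₜ, xₜ - x*⟫` by `γ T`; the second claim is then pigeonhole.
-/

open Finset RealInnerProductSpace

section InnerProductSpace

variable {F : Type*} [NormedAddCommGroup F] [InnerProductSpace ℝ F]

theorem real_inner_sub_le_zero_of_forall_norm_sub_le {K : Set F} (hK : Convex ℝ K) {u v : F}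
    (hv : v ∈ K) (hmin : ∀ w ∈ K, ‖u - v‖ ≤ ‖u - w‖) {w : F} (hw : w ∈ K) :
    ⟪u - v, w - v⟫ ≤ 0 := by
  have : Nonempty K := ⟨⟨v, hv⟩⟩
  refine (norm_eq_iInf_iff_real_inner_le_zero hK hv).1 ?_ w hw
  have hbdd : BddBelow (Set.range fun w : K => ‖u - w‖) :=
    ⟨0, Set.forall_mem_range.2 fun _ => norm_nonneg _⟩
  exact le_antisymm (le_ciInf fun w => hmin w w.2) (ciInf_le hbdd ⟨v, hv⟩)

theorem sq_norm_sub_le_of_inner_nonpos {a p y g : F} {η : ℝ}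
    (h : ⟪a - η • g - p, y - p⟫ ≤ 0) :
    ‖p - y‖ ^ 2 ≤ ‖a - y‖ ^ 2 - ‖a - p‖ ^ 2 - 2 * η * ⟪g, p - y⟫ := by
  have hsplit : ⟪a - η • g - p, y - p⟫ = η * ⟪g, p - y⟫ - ⟪a - p, p - y⟫ := by
    rw [← neg_sub p y, inner_neg_right, sub_right_comm, inner_sub_left, real_inner_smul_left]
    ring
  rw [show a - y = (a - p) + (p - y) by abel, norm_add_sq_real]
  linarith

theorem mul_inner_le_of_sq_norm_le_mul_inner {e g : F} {η : ℝ} (hη : 0 ≤ η)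
    (h : ‖e‖ ^ 2 ≤ η * ⟪g, e⟫) : η * ⟪g, e⟫ ≤ η ^ 2 * ‖g‖ ^ 2 := by
  have hcs : η * ⟪g, e⟫ ≤ η * (‖g‖ * ‖e‖) :=
    mul_le_mul_of_nonneg_left (real_inner_le_norm g e) hη
  nlinarith [sq_nonneg (‖e‖ - η * ‖g‖), norm_nonneg e, norm_nonneg g]

theorem optimistic_gradient_step_le {a x a' y g₀ g₁ : F} {η : ℝ} (hη : 0 ≤ η)
    (h₁ : ⟪a - η • g₁ - a', y - a'⟫ ≤ 0) (h₂ : ⟪a - η • g₁ - a', x - a'⟫ ≤ 0)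
    (h₃ : ⟪a - η • g₀ - x, a' - x⟫ ≤ 0) :
    ‖a' - y‖ ^ 2 + ‖x - a‖ ^ 2 + ‖x - a'‖ ^ 2 ≤
      ‖a - y‖ ^ 2 + 2 * η ^ 2 * ‖g₁ - g₀‖ ^ 2 - 2 * η * ⟪g₁, x - y⟫ := by
  have hA := sq_norm_sub_le_of_inner_nonpos h₁
  have hB := sq_norm_sub_le_of_inner_nonpos h₃
  have hgap : ‖x - a'‖ ^ 2 ≤ η * ⟪g₁ - g₀, x - a'⟫ := by
    have hsum : ⟪a - η • g₁ - a', x - a'⟫ + ⟪a - η • g₀ - x, a' - x⟫ =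
        ‖x - a'‖ ^ 2 - η * ⟪g₁ - g₀, x - a'⟫ := by
      rw [← neg_sub x a', inner_neg_right, ← sub_eq_add_neg, ← inner_sub_left,
        ← real_inner_self_eq_norm_sq, ← real_inner_smul_left, ← inner_sub_left]
      congr 1
      module
    linarith
  have hC := mul_inner_le_of_sq_norm_le_mul_inner hη hgap
  have hsplit : η * ⟪g₁, a' - y⟫ + η * ⟪g₀, x - a'⟫ =
      η * ⟪g₁, x - y⟫ - η * ⟪g₁ - g₀, x - a'⟫ := by
    rw [inner_sub_left, show a' - y = (x - y) - (x - a') by abel, inner_sub_right]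
    ring
  rw [norm_sub_rev x a]
  linarith

end InnerProductSpace

theorem optimistic_gradient_step_le_of_lipschitz {E W : Type*} [NormedAddCommGroup E]
    [InnerProductSpace ℝ E] [NormedAddCommGroup W] [InnerProductSpace ℝ W] (S : E →ₗ[ℝ] W)
    (P : E → E) {K : Set E} (hPK : ∀ v, P v ∈ K)
    (hVI : ∀ v, ∀ y ∈ K, ⟪S (v - P v), S (y - P v)⟫ ≤ 0) {ℓ Λ η : ℝ} (hℓ : 0 ≤ ℓ)
    (hη : 0 ≤ η) (hS : ∀ v, ℓ * ‖v‖ ^ 2 ≤ ‖S v‖ ^ 2) (hηΛ : 8 * η ^ 2 * Λ ≤ ℓ)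
    {x₀ a x a' y g₀ g₁ : E} (hy : y ∈ K) (hx : x = P (a - η • g₀))
    (ha' : a' = P (a - η • g₁)) (hg : ‖S (g₁ - g₀)‖ ^ 2 ≤ Λ * ‖x - x₀‖ ^ 2) :
    ‖S (a' - y)‖ ^ 2 + ℓ * (‖x - a‖ ^ 2 + ‖x - a'‖ ^ 2) ≤
      ‖S (a - y)‖ ^ 2 + ℓ / 2 * (‖x - a‖ ^ 2 + ‖x₀ - a‖ ^ 2) - 2 * η * ⟪S g₁, S (x - y)⟫ := by
  have h₁ := hVI (a - η • g₁) y hy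
  have h₂ := hVI (a - η • g₁) x (hx ▸ hPK _)
  have h₃ := hVI (a - η • g₀) a' (ha' ▸ hPK _)
  rw [← ha'] at h₁ h₂
  rw [← hx] at h₃
  have hxa := hS (x - a)
  have hxa' := hS (x - a')
  simp only [map_sub, map_smul] at h₁ h₂ h₃ hg hxa hxa' ⊢
  have hstep := optimistic_gradient_step_le hη h₁ h₂ h₃
  have hdx : ‖x - x₀‖ ^ 2 ≤ 2 * (‖x - a‖ ^ 2 + ‖x₀ - a‖ ^ 2) :=
    calc ‖x - x₀‖ ^ 2 ≤ (‖x - a‖ + ‖x₀ - a‖) ^ 2 := by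
          gcongr; simpa using norm_sub_le (x - a) (x₀ - a)
      _ ≤ _ := add_sq_le
  have hdg : 2 * η ^ 2 * ‖S g₁ - S g₀‖ ^ 2 ≤ ℓ / 2 * (‖x - a‖ ^ 2 + ‖x₀ - a‖ ^ 2) :=
    calc 2 * η ^ 2 * ‖S g₁ - S g₀‖ ^ 2 ≤ 2 * η ^ 2 * Λ * ‖x - x₀‖ ^ 2 := by
          rw [mul_assoc _ Λ]; gcongr
      _ ≤ ℓ / 4 * ‖x - x₀‖ ^ 2 := by gcongr; linarith
      _ ≤ _ := by linarith [mul_le_mul_of_nonneg_left hdx hℓ]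
  linarith

section BlockScale

variable {ι κ : Type*}

def blockScale (c : ι → ℝ) : EuclideanSpace ℝ (ι × κ) →ₗ[ℝ] EuclideanSpace ℝ (ι × κ) where
  toFun v := WithLp.toLp 2 fun p => c p.1 * v p
  map_add' v w := by ext p; simp [mul_add]
  map_smul' s v := by ext p; simp [mul_left_comm]

@[simp]
theorem blockScale_apply (c : ι → ℝ) (v : EuclideanSpace ℝ (ι × κ)) (p : ι × κ) :
    blockScale c v p = c p.1 * v p := rfl

variable [Fintype ι] [Fintype κ]

theorem inner_blockScale (c : ι → ℝ) (v v' : EuclideanSpace ℝ (ι × κ)) :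
    ⟪blockScale c v, blockScale c v'⟫ = ∑ r, c r ^ 2 * ∑ j, v (r, j) * v' (r, j) := by
  simp only [PiLp.inner_apply, blockScale_apply, Fintype.sum_prod_type, mul_sum]
  refine sum_congr rfl fun r _ => sum_congr rfl fun j _ => ?_
  simp only [RCLike.inner_apply, conj_trivial]
  ring

theorem sq_norm_blockScale (c : ι → ℝ) (v : EuclideanSpace ℝ (ι × κ)) :
    ‖blockScale c v‖ ^ 2 = ∑ r, c r ^ 2 * ∑ j, v (r, j) ^ 2 := by
  rw [← real_inner_self_eq_norm_sq, inner_blockScale]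
  simp only [sq]

theorem sq_norm_eq_sum_blocks (v : EuclideanSpace ℝ (ι × κ)) :
    ‖v‖ ^ 2 = ∑ r, ∑ j, v (r, j) ^ 2 := by
  simp [EuclideanSpace.norm_sq_eq, Fintype.sum_prod_type]

theorem le_sq_norm_blockScale {c : ι → ℝ} {μ : ℝ} (hc : ∀ r, μ ≤ c r ^ 2)
    (v : EuclideanSpace ℝ (ι × κ)) : μ * ‖v‖ ^ 2 ≤ ‖blockScale c v‖ ^ 2 := by
  rw [sq_norm_blockScale, sq_norm_eq_sum_blocks, mul_sum]
  exact sum_le_sum fun r _ => mul_le_mul_of_nonneg_right (hc r) (by positivity)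

theorem sq_norm_blockScale_le {c : ι → ℝ} {M : ℝ} (hc : ∀ r, c r ^ 2 ≤ M)
    (v : EuclideanSpace ℝ (ι × κ)) : ‖blockScale c v‖ ^ 2 ≤ M * ‖v‖ ^ 2 := by
  rw [sq_norm_blockScale, sq_norm_eq_sum_blocks, mul_sum]
  exact sum_le_sum fun r _ => mul_le_mul_of_nonneg_right (hc r) (by positivity)

theorem inner_blockScale_sub_nonpos_of_forall_norm_sub_le {Z : ι → Set (κ → ℝ)}
    {X : Set (EuclideanSpace ℝ (ι × κ))} (hX : X = {x | ∀ r, (fun j => x (r, j)) ∈ Z r})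
    (hXc : Convex ℝ X) (c : ι → ℝ) {v p y : EuclideanSpace ℝ (ι × κ)} (hp : p ∈ X)
    (hmin : ∀ z ∈ X, ‖v - p‖ ≤ ‖v - z‖) (hy : y ∈ X) :
    ⟪blockScale c (v - p), blockScale c (y - p)⟫ ≤ 0 := by
  classical
  rw [inner_blockScale]
  refine sum_nonpos fun r _ => mul_nonpos_of_nonneg_of_nonpos (sq_nonneg _) ?_
  -- test the unweighted inequality against `p` with its `r`-th block replaced by that of `y`
  let z : EuclideanSpace ℝ (ι × κ) := WithLp.toLp 2 fun q => if q.1 = r then y q else p q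
  have hz : z ∈ X := by
    rw [hX] at hp hy ⊢
    intro r'
    by_cases hr : r' = r
    · simpa [z, hr] using hy r
    · simpa [z, hr] using hp r'
  have hblock : ∑ j, (v - p) (r, j) * (y - p) (r, j) = ⟪v - p, z - p⟫ := by
    simp only [PiLp.inner_apply, Fintype.sum_prod_type]
    rw [Fintype.sum_eq_single r fun r' hr' => by simp [z, hr']]
    simp [z, mul_comm]
  exact hblock ▸ real_inner_sub_le_zero_of_forall_norm_sub_le hXc hp hmin hz

theorem sq_norm_blockScale_sub_blockScale_le {E : Type*} [SeminormedAddCommGroup E]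
    (a : ι → E → ℝ) (F : E → EuclideanSpace ℝ (ι × κ)) {x y : E} {M L α B : ℝ}
    (ha : ∀ r, |a r x| ≤ M) (haLip : ∀ r, |a r x - a r y| ≤ α * ‖x - y‖)
    (hF : ‖F x - F y‖ ≤ L * ‖x - y‖) (hB : ∀ r, √(∑ j, F y (r, j) ^ 2) ≤ B) :
    ‖blockScale (fun r => a r x) (F x) - blockScale (fun r => a r y) (F y)‖ ^ 2 ≤
      2 * (M ^ 2 * L ^ 2 + Fintype.card ι * α ^ 2 * B ^ 2) * ‖x - y‖ ^ 2 := by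
  set p := blockScale (fun r => a r x) (F x - F y)
  set q := blockScale (fun r => a r x - a r y) (F y)
  have hsplit : blockScale (fun r => a r x) (F x) - blockScale (fun r => a r y) (F y) = p + q := by
    ext i
    simp only [p, q, PiLp.sub_apply, PiLp.add_apply, blockScale_apply]
    ring
  have hp : ‖p‖ ^ 2 ≤ M ^ 2 * L ^ 2 * ‖x - y‖ ^ 2 :=
    calc ‖p‖ ^ 2 ≤ M ^ 2 * ‖F x - F y‖ ^ 2 :=
          sq_norm_blockScale_le (fun r => sq_le_sq' (abs_le.1 (ha r)).1 (abs_le.1 (ha r)).2) _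
      _ ≤ M ^ 2 * (L * ‖x - y‖) ^ 2 := by gcongr
      _ = _ := by ring
  have hq : ‖q‖ ^ 2 ≤ Fintype.card ι * α ^ 2 * B ^ 2 * ‖x - y‖ ^ 2 :=
    calc ‖q‖ ^ 2 ≤ ∑ _r : ι, (α * ‖x - y‖) ^ 2 * B ^ 2 := by
          rw [sq_norm_blockScale]
          refine sum_le_sum fun r _ => mul_le_mul ?_ (Real.sqrt_le_iff.1 (hB r)).2
            (by positivity) (by positivity)
          exact sq_le_sq' (abs_le.1 (haLip r)).1 (abs_le.1 (haLip r)).2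
      _ = _ := by rw [sum_const, card_univ, nsmul_eq_mul]; ring
  calc _ = ‖p + q‖ ^ 2 := by rw [hsplit]
    _ ≤ (‖p‖ + ‖q‖) ^ 2 := by gcongr; exact norm_add_le p q
    _ ≤ 2 * (‖p‖ ^ 2 + ‖q‖ ^ 2) := add_sq_le
    _ ≤ _ := by linarith

end BlockScale

theorem pos_and_sq_mul_le_of_le_sqrt_div {η ℓ K : ℝ} (hη : 0 < η) (hℓ : 0 < ℓ)
    (hηK : η ≤ 1 / 4 * √(ℓ / K)) : 0 < K ∧ η ^ 2 * K ≤ ℓ / 16 := by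
  have hK : 0 < K :=
    (div_pos_iff_of_pos_left hℓ).1 (Real.sqrt_pos.1 (by linarith))
  refine ⟨hK, ?_⟩
  calc η ^ 2 * K ≤ (1 / 4 * √(ℓ / K)) ^ 2 * K := by gcongr
    _ = ℓ / 16 := by rw [mul_pow, Real.sq_sqrt (by positivity)]; field_simp; ring

theorem sum_Icc_le_of_step {Φ a b e : ℕ → ℝ} {c : ℝ} (hc : 0 ≤ c) (hΦ : ∀ t, 0 ≤ Φ t)
    (hb : ∀ t, 0 ≤ b t) (hb₀ : b 0 = 0)
    (hstep : ∀ t, Φ (t + 2) + c * (a (t + 1) + b (t + 1)) ≤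
      Φ (t + 1) + c / 2 * (a (t + 1) + b t) + e (t + 1))
    (T : ℕ) : c / 2 * ∑ t ∈ Icc 1 T, (a t + b t) ≤ Φ 1 + ∑ t ∈ Icc 1 T, e t := by
  -- half of the last `b` is carried along: it pays for the `b t` on the right of the next step
  have key : ∀ n, Φ (n + 1) + c / 2 * ∑ t ∈ Icc 1 n, (a t + b t) + c / 2 * b n ≤
      Φ 1 + ∑ t ∈ Icc 1 n, e t := by
    intro n
    induction n with
    | zero => simp [hb₀]
    | succ n ih =>
      rw [sum_Icc_succ_top (by omega), sum_Icc_succ_top (by omega)]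
      linarith [hstep n]
  linarith [key T, hΦ (T + 1), mul_nonneg (div_nonneg hc zero_le_two) (hb T)]

theorem sum_Icc_one_eq_sum_fin {M : Type*} [AddCommMonoid M] (f : ℕ → M) (T : ℕ) :
    ∑ t ∈ Icc 1 T, f t = ∑ i : Fin T, f (i + 1) := by
  rw [Fin.sum_univ_eq_sum_range (fun i => f (i + 1)), range_eq_Ico, sum_Ico_add' f 0 T 1,
    zero_add, Ico_add_one_right_eq_Icc]

theorem exists_mem_Icc_le_sqrt_of_sum_sq_le {f g : ℕ → ℝ} {T : ℕ} (hT : 1 ≤ T) {A B : ℝ}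
    (h : ∑ t ∈ Icc 1 T, (f t ^ 2 + g t ^ 2) ≤ A + B * T) :
    ∃ t ∈ Icc 1 T, f t ≤ √(B + A / T) ∧ g t ≤ √(B + A / T) := by
  have hT' : (0 : ℝ) < T := by exact_mod_cast hT
  have hsum : ∑ t ∈ Icc 1 T, (f t ^ 2 + g t ^ 2) ≤ ∑ _t ∈ Icc 1 T, (B + A / T) := by
    rw [sum_const, Nat.card_Icc, Nat.add_sub_cancel, nsmul_eq_mul, mul_add,
      mul_div_cancel₀ _ hT'.ne']
    linarith
  obtain ⟨t, ht, hle⟩ := exists_le_of_sum_le ⟨1, mem_Icc.2 ⟨le_rfl, hT⟩⟩ hsum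
  exact ⟨t, ht, (le_abs_self _).trans (Real.abs_le_sqrt (by linarith [sq_nonneg (g t)])),
    (le_abs_self _).trans (Real.abs_le_sqrt (by linarith [sq_nonneg (f t)]))⟩

theorem ogd_path_length_with_slackness_general {d m : ℕ}
    (Z : Fin d → Set (Fin m → ℝ))
    (X : Set (EuclideanSpace ℝ (Fin d × Fin m)))
    (hX : X = {x | ∀ r : Fin d, (fun j => x (r, j)) ∈ Z r})
    (hXc : Convex ℝ X)
    (F : EuclideanSpace ℝ (Fin d × Fin m) → EuclideanSpace ℝ (Fin d × Fin m))
    (L BF : ℝ) (hL : ∀ x y, ‖F x - F y‖ ≤ L * ‖x - y‖)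
    (hBF : ∀ x ∈ X, ∀ r : Fin d, Real.sqrt (∑ j, (F x (r, j)) ^ 2) ≤ BF)
    (a w : Fin d → EuclideanSpace ℝ (Fin d × Fin m) → ℝ)
    (α ℓ h : ℝ) (hℓ : 0 < ℓ)
    (haLip : ∀ r x y, |a r x - a r y| ≤ α * ‖x - y‖)
    (hab : ∀ r, ∀ x ∈ X, ℓ ≤ a r x ∧ a r x ≤ h)
    (hwb : ∀ r, ∀ x ∈ X, ℓ ≤ w r x ∧ w r x ≤ h)
    (γ : ℝ)
    (hMinty : ∀ (T : ℕ) (xs : Fin T → EuclideanSpace ℝ (Fin d × Fin m)),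
      (∀ t, xs t ∈ X) → ∃ xstar ∈ X,
        -(γ * T) ≤ ∑ t, ∑ p : Fin d × Fin m,
              (xs t p - xstar p) * (F (xs t) p * a p.1 (xs t) * w p.1 xstar))
    (η D : ℝ) (hη : 0 < η)
    (hηle : η ≤ (1 / 4) * Real.sqrt (ℓ / (h ^ 3 * L ^ 2 + h * BF ^ 2 * α ^ 2 * d)))
    (hD : ∀ x ∈ X, ∀ y ∈ X, ‖x - y‖ ≤ D)
    (proj : EuclideanSpace ℝ (Fin d × Fin m) → EuclideanSpace ℝ (Fin d × Fin m))
    (hproj : ∀ v, proj v ∈ X ∧ ∀ y ∈ X, ‖v - proj v‖ ≤ ‖v - y‖)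
    (u x xh : ℕ → EuclideanSpace ℝ (Fin d × Fin m))
    (hu : ∀ t, ∀ p : Fin d × Fin m, u t p = a p.1 (x t) * F (x t) p)
    (hx0 : x 0 ∈ X) (hinit : xh 1 = x 0)
    (hxup : ∀ t, 1 ≤ t → x t = proj (xh t - η • u (t - 1)))
    (hxhup : ∀ t, 1 ≤ t → xh (t + 1) = proj (xh t - η • u t))
    (T : ℕ) :
    (∑ t ∈ Finset.Icc 1 T, (‖x t - xh t‖ ^ 2 + ‖x t - xh (t + 1)‖ ^ 2) ≤
        2 * D ^ 2 * h / ℓ + (4 * η * γ / ℓ) * T) ∧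
      (1 ≤ T → ∃ t ∈ Finset.Icc 1 T,
        ‖x t - xh t‖ ≤ Real.sqrt (4 * η * γ / ℓ + 2 * D ^ 2 * h / (ℓ * T)) ∧
        ‖x t - xh (t + 1)‖ ≤ Real.sqrt (4 * η * γ / ℓ + 2 * D ^ 2 * h / (ℓ * T))) := by
  obtain ⟨hK, hηK⟩ := pos_and_sq_mul_le_of_le_sqrt_div hη hℓ hηle
  have hh : 0 ≤ h := by
    by_contra! hh
    nlinarith [mul_nonpos_of_nonpos_of_nonneg hh.le
      (by positivity : 0 ≤ h ^ 2 * L ^ 2 + BF ^ 2 * α ^ 2 * d)]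
  have hxX : ∀ t, x t ∈ X
    | 0 => hx0
    | t + 1 => hxup (t + 1) (by omega) ▸ (hproj _).1
  obtain ⟨xstar, hxstar, hM⟩ := hMinty T (fun i => x (i + 1)) fun i => hxX _
  have hw : ∀ r, √(w r xstar) ^ 2 = w r xstar :=
    fun r => Real.sq_sqrt (hℓ.le.trans (hwb r xstar hxstar).1)
  -- `‖S v‖²` is the `w xstar`-weighted squared norm of `v`
  set S := blockScale (κ := Fin m) fun r => √(w r xstar)
  have hVI : ∀ v, ∀ y ∈ X, ⟪S (v - proj v), S (y - proj v)⟫ ≤ 0 := fun v y hy =>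
    inner_blockScale_sub_nonpos_of_forall_norm_sub_le hX hXc _ (hproj v).1 (hproj v).2 hy
  have hSℓ : ∀ v, ℓ * ‖v‖ ^ 2 ≤ ‖S v‖ ^ 2 :=
    le_sq_norm_blockScale fun r => (hw r).symm ▸ (hwb r xstar hxstar).1
  have hSh : ∀ v, ‖S v‖ ^ 2 ≤ h * ‖v‖ ^ 2 :=
    sq_norm_blockScale_le fun r => (hw r).trans_le (hwb r xstar hxstar).2
  have hu' : ∀ t, u t = blockScale (fun r => a r (x t)) (F (x t)) := fun t => by
    ext p; exact hu t p
  set Λ := h * (2 * (h ^ 2 * L ^ 2 + d * α ^ 2 * BF ^ 2)) with hΛ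
  have hηΛ : 8 * η ^ 2 * Λ ≤ ℓ := by
    linarith [show 8 * η ^ 2 * Λ = 16 * (η ^ 2 * (h ^ 3 * L ^ 2 + h * BF ^ 2 * α ^ 2 * d)) by
      rw [hΛ]; ring]
  have hΔu : ∀ t, ‖S (u (t + 1) - u t)‖ ^ 2 ≤ Λ * ‖x (t + 1) - x t‖ ^ 2 := fun t => by
    have ha : ∀ r, |a r (x (t + 1))| ≤ h := fun r => by
      have := hab r _ (hxX (t + 1))
      exact abs_le.2 ⟨by linarith, this.2⟩
    calc _ ≤ h * ‖u (t + 1) - u t‖ ^ 2 := hSh _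
      _ ≤ h * (2 * (h ^ 2 * L ^ 2 + d * α ^ 2 * BF ^ 2) * ‖x (t + 1) - x t‖ ^ 2) := by
        rw [hu', hu']
        gcongr
        simpa only [Fintype.card_fin] using sq_norm_blockScale_sub_blockScale_le a F ha
          (fun r => haLip _ _ _) (hL _ _) (hBF _ (hxX t))
      _ = _ := by ring
  have hsum := sum_Icc_le_of_step (Φ := fun t => ‖S (xh t - xstar)‖ ^ 2)
    (a := fun t => ‖x t - xh t‖ ^ 2) (b := fun t => ‖x t - xh (t + 1)‖ ^ 2)
    (e := fun t => -(2 * η * ⟪S (u t), S (x t - xstar)⟫)) hℓ.le (fun _ => sq_nonneg _)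
    (fun _ => sq_nonneg _) (by simp [hinit]) (fun t => by
      rw [← sub_eq_add_neg]
      exact optimistic_gradient_step_le_of_lipschitz S proj (fun v => (hproj v).1) hVI hℓ.le
        hη.le hSℓ hηΛ hxstar (hxup (t + 1) (by omega)) (hxhup (t + 1) (by omega)) (hΔu t)) T
  have hG : -(γ * T) ≤ ∑ t ∈ Icc 1 T, ⟪S (u t), S (x t - xstar)⟫ := by
    rw [sum_Icc_one_eq_sum_fin]
    refine hM.trans_eq (sum_congr rfl fun i _ => ?_)
    simp only [S, inner_blockScale, hw, hu, Fintype.sum_prod_type, mul_sum, PiLp.sub_apply]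
    exact sum_congr rfl fun r _ => sum_congr rfl fun j _ => by ring
  have hΦ₁ : ‖S (xh 1 - xstar)‖ ^ 2 ≤ h * D ^ 2 :=
    (hSh _).trans (by gcongr; exact hD _ (hinit ▸ hx0) _ hxstar)
  have hpath : ∑ t ∈ Icc 1 T, (‖x t - xh t‖ ^ 2 + ‖x t - xh (t + 1)‖ ^ 2) ≤
      2 * D ^ 2 * h / ℓ + 4 * η * γ / ℓ * T := by
    rw [sum_neg_distrib, ← mul_sum] at hsum
    rw [show 2 * D ^ 2 * h / ℓ + 4 * η * γ / ℓ * T = (2 * D ^ 2 * h + 4 * η * γ * T) / ℓ by ring,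
      le_div_iff₀ hℓ]
    linarith [mul_le_mul_of_nonneg_left hG (by positivity : (0 : ℝ) ≤ 2 * η)]
  refine ⟨hpath, fun hT => ?_⟩
  simpa only [div_div] using exists_mem_Icc_le_sqrt_of_sum_sq_le (f := fun t => ‖x t - xh t‖)
    (g := fun t => ‖x t - xh (t + 1)‖) hT hpath

/-- Path length bound under the average generalized Minty property with slackness `γ`:
`Σ_{t=1}^T (‖x⁽ᵗ⁾ − x̂⁽ᵗ⁾‖² + ‖x⁽ᵗ⁾ − x̂⁽ᵗ⁺¹⁾‖²) ≤ 2 D_X² h/ℓ + (4ηγ/ℓ)·T`, and some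
iterate `t ∈ [1,T]` has `‖x⁽ᵗ⁾ − x̂⁽ᵗ⁾‖, ‖x⁽ᵗ⁾ − x̂⁽ᵗ⁺¹⁾‖ ≤ √(4ηγ/ℓ + 2D_X²h/(ℓT))`. -/
theorem ogd_path_length_with_slackness {d m : ℕ}
    (Z : Fin d → Set (Fin m → ℝ))
    (X : Set (EuclideanSpace ℝ (Fin d × Fin m)))
    (hX : X = {x | ∀ r : Fin d, (fun j => x (r, j)) ∈ Z r})
    (hXc : Convex ℝ X) (hXk : IsCompact X)
    (F : EuclideanSpace ℝ (Fin d × Fin m) → EuclideanSpace ℝ (Fin d × Fin m))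
    (L BF : ℝ) (hL : ∀ x y, ‖F x - F y‖ ≤ L * ‖x - y‖)
    (hBF : ∀ x ∈ X, ∀ r : Fin d, Real.sqrt (∑ j, (F x (r, j)) ^ 2) ≤ BF)
    (a w : Fin d → EuclideanSpace ℝ (Fin d × Fin m) → ℝ)
    (α ℓ h : ℝ) (hℓ : 0 < ℓ)
    (haLip : ∀ r x y, |a r x - a r y| ≤ α * ‖x - y‖)
    (hab : ∀ r, ∀ x ∈ X, ℓ ≤ a r x ∧ a r x ≤ h)
    (hwb : ∀ r, ∀ x ∈ X, ℓ ≤ w r x ∧ w r x ≤ h)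
    (γ : ℝ) (hγ : 0 ≤ γ)
    (hMinty : ∀ (T : ℕ) (xs : Fin T → EuclideanSpace ℝ (Fin d × Fin m)),
      (∀ t, xs t ∈ X) → ∃ xstar ∈ X,
        -(γ * T) ≤ ∑ t, ∑ p : Fin d × Fin m,
              (xs t p - xstar p) * (F (xs t) p * a p.1 (xs t) * w p.1 xstar))
    (η D : ℝ) (hη : 0 < η)
    (hηle : η ≤ (1 / 4) * Real.sqrt (ℓ / (h ^ 3 * L ^ 2 + h * BF ^ 2 * α ^ 2 * d)))
    (hD : ∀ x ∈ X, ∀ y ∈ X, ‖x - y‖ ≤ D)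
    (proj : EuclideanSpace ℝ (Fin d × Fin m) → EuclideanSpace ℝ (Fin d × Fin m))
    (hproj : ∀ v, proj v ∈ X ∧ ∀ y ∈ X, ‖v - proj v‖ ≤ ‖v - y‖)
    (u x xh : ℕ → EuclideanSpace ℝ (Fin d × Fin m))
    (hu : ∀ t, ∀ p : Fin d × Fin m, u t p = a p.1 (x t) * F (x t) p)
    (hx0 : x 0 ∈ X) (hinit : xh 1 = x 0)
    (hxup : ∀ t, 1 ≤ t → x t = proj (xh t - η • u (t - 1)))
    (hxhup : ∀ t, 1 ≤ t → xh (t + 1) = proj (xh t - η • u t))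
    (T : ℕ) :
    (∑ t ∈ Finset.Icc 1 T, (‖x t - xh t‖ ^ 2 + ‖x t - xh (t + 1)‖ ^ 2) ≤
        2 * D ^ 2 * h / ℓ + (4 * η * γ / ℓ) * T) ∧
      (1 ≤ T → ∃ t ∈ Finset.Icc 1 T,
        ‖x t - xh t‖ ≤ Real.sqrt (4 * η * γ / ℓ + 2 * D ^ 2 * h / (ℓ * T)) ∧
        ‖x t - xh (t + 1)‖ ≤ Real.sqrt (4 * η * γ / ℓ + 2 * D ^ 2 * h / (ℓ * T))) :=
  ogd_path_length_with_slackness_general Z X hX hXc F L BF hL hBF a w α ℓ h hℓ haLip hab hwb γ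
    hMinty η D hη hηle hD proj hproj u x xh hu hx0 hinit hxup hxhup T
end
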